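/- arXiv:1402.2869 — 3 statements merged into one kernel-verified Lean document; each statement's English description precedes it below -/
import Mathlib

section
/- Under the genericness assumption, the edge (p*_{k−1}, q*_{k−1}) removed when passing from the optimal forest T*_{k−1} to T*_k has the smallest potential among all edges in the cut-set separating the component t_k of T*_k containing the new sink s*_k from the rest of the network: V_{p*_{k−1} q*_{k−1}} = min { V_{pq} : p ∈ t_k, q ∉ t_k, (p,q) ∈ E }. -/
open Finset

/-- A `W`-graph on the network `G` with sink set `W`: every non-sink state `i` has exactly
one outgoing arrow `i → next i` along an edge of `G`, sinks are encoded as fixed points of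
`next`, and from every state some iterate of `next` reaches a sink (no cycles). -/
structure WGraph {V : Type*} (G : SimpleGraph V) (W : Finset V) where
  next : V → V
  adj_of_not_sink : ∀ i ∉ W, G.Adj i (next i)
  sink_fixed : ∀ i ∈ W, next i = i
  absorbed : ∀ i : V, ∃ n : ℕ, next^[n] i ∈ W

/-- The cost `∑_{(i → j)} (V_{ij} - V_i)` of a `W`-graph, the sum running over its arrows. -/
def wcost {V : Type*} [Fintype V] [DecidableEq V] {G : SimpleGraph V} {W : Finset V}
    (Ve : Sym2 V → ℝ) (Vp : V → ℝ) (g : WGraph G W) : ℝ :=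
  ∑ i ∈ Wᶜ, (Ve s(i, g.next i) - Vp i)

/-- The (undirected) edge set of the forest underlying a `W`-graph. -/
def wEdges {V : Type*} [Fintype V] [DecidableEq V] {G : SimpleGraph V} {W : Finset V}
    (g : WGraph G W) : Finset (Sym2 V) :=
  Wᶜ.image fun i => s(i, g.next i)

/-- An optimal `W`-graph with `k` sinks: one minimizing the cost among all `W`-graphs
on `G` with `k` sinks. -/
def IsOptimalWGraph {V : Type*} [Fintype V] [DecidableEq V] (G : SimpleGraph V)
    (Ve : Sym2 V → ℝ) (Vp : V → ℝ) (k : ℕ) (W : Finset V) (g : WGraph G W) : Prop :=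
  W.card = k ∧
    ∀ (W' : Finset V) (g' : WGraph G W'), W'.card = k →
      wcost Ve Vp g ≤ wcost Ve Vp g'

/-- Assumption 1 (genericness): all vertex potentials are distinct, all edge potentials
(on edges of `G`) are distinct, and all differences `V_{ij} - V_k` are distinct. -/
def Generic {V : Type*} (G : SimpleGraph V) (Ve : Sym2 V → ℝ) (Vp : V → ℝ) : Prop :=
  Function.Injective Vp ∧
  (∀ e ∈ G.edgeSet, ∀ f ∈ G.edgeSet, Ve e = Ve f → e = f) ∧
  (∀ e ∈ G.edgeSet, ∀ f ∈ G.edgeSet, ∀ i j : V,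
      Ve e - Vp i = Ve f - Vp j → e = f ∧ i = j)

/-- A minimum spanning tree of a weighted graph. -/
def IsMST {V : Type*} (G : SimpleGraph V) (c : Sym2 V → ℝ) (T : SimpleGraph V) : Prop :=
  T.IsTree ∧ T ≤ G ∧
    ∀ T' : SimpleGraph V, T'.IsTree → T' ≤ G →
      (∑ᶠ e ∈ T.edgeSet, c e) ≤ ∑ᶠ e ∈ T'.edgeSet, c e

set_option linter.unusedSectionVars false
set_option linter.unusedVariables false

section Basics
variable {V : Type*} [Fintype V] [DecidableEq V] {G : SimpleGraph V} {W : Finset V}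

/-- absorption time -/
def wgH (g : WGraph G W) (v : V) : ℕ := Nat.find (g.absorbed v)

/-- eventual sink -/
def wgS (g : WGraph G W) (v : V) : V := g.next^[wgH g v] v

def wgReach (g : WGraph G W) (v w : V) : Prop := ∃ n : ℕ, g.next^[n] v = w

lemma wgS_mem (g : WGraph G W) (v : V) : wgS g v ∈ W := Nat.find_spec (g.absorbed v)

lemma wgH_pre (g : WGraph G W) (v : V) {j : ℕ} (h : j < wgH g v) : g.next^[j] v ∉ W :=
  Nat.find_min (g.absorbed v) h

lemma wgH_le (g : WGraph G W) {u : V} {n : ℕ} (h : g.next^[n] u ∈ W) : wgH g u ≤ n :=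
  Nat.find_le h

lemma iter_fixed (g : WGraph G W) {u : V} (hu : u ∈ W) (n : ℕ) : g.next^[n] u = u := by
  induction n with
  | zero => rfl
  | succ n ih => rw [Function.iterate_succ_apply', ih, g.sink_fixed u hu]

lemma wgS_past (g : WGraph G W) (v : V) {n : ℕ} (h : wgH g v ≤ n) :
    g.next^[n] v = wgS g v := by
  obtain ⟨d, rfl⟩ := Nat.exists_eq_add_of_le h
  rw [add_comm, Function.iterate_add_apply]
  exact iter_fixed g (wgS_mem g v) d

lemma wg_next_ne (g : WGraph G W) {u : V} (hu : u ∉ W) : g.next u ≠ u := by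
  intro h
  have hfix : ∀ n, g.next^[n] u = u := by
    intro n; induction n with
    | zero => rfl
    | succ n ih => rw [Function.iterate_succ_apply', ih, h]
  obtain ⟨n, hn⟩ := g.absorbed u
  rw [hfix n] at hn; exact hu hn

lemma wgH_succ (g : WGraph G W) {u : V} (hu : u ∉ W) :
    wgH g u = wgH g (g.next u) + 1 := by
  have h0 : wgH g u ≠ 0 := by
    intro h
    have := wgS_mem g u
    rw [wgS, h] at this; exact hu this
  obtain ⟨m, hm⟩ := Nat.exists_eq_succ_of_ne_zero h0
  have h1 : g.next^[m] (g.next u) ∈ W := by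
    rw [← Function.iterate_succ_apply]
    have := wgS_mem g u; rwa [wgS, hm] at this
  have h2 : wgH g (g.next u) ≤ m := wgH_le g h1
  have h3 : wgH g u ≤ wgH g (g.next u) + 1 := by
    apply wgH_le
    rw [Function.iterate_succ_apply]
    exact wgS_mem g (g.next u)
  omega

lemma wgReach_sink_eq (g : WGraph G W) {v u : V} (h : wgReach g v u) (hu : u ∈ W) :
    u = wgS g v := by
  obtain ⟨n, hn⟩ := h
  rcases lt_or_ge n (wgH g v) with hlt | hle
  · exact absurd (hn ▸ hu) (wgH_pre g v hlt)
  · rw [← hn, wgS_past g v hle]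

lemma wgS_iter (g : WGraph G W) (v : V) (j : ℕ) : wgS g (g.next^[j] v) = wgS g v := by
  have h : wgReach g v (wgS g (g.next^[j] v)) :=
    ⟨j + wgH g (g.next^[j] v), by rw [add_comm, Function.iterate_add_apply]; rfl⟩
  exact (wgReach_sink_eq g h (wgS_mem g _)).symm ▸ rfl

lemma wgS_fixed (g : WGraph G W) {u : V} (hu : u ∈ W) : wgS g u = u := by
  rw [wgS, iter_fixed g hu]

lemma wgReach_trans_sink (g : WGraph G W) {v u : V} (h : wgReach g v u) :
    wgS g u = wgS g v := by
  obtain ⟨n, rfl⟩ := h; exact wgS_iter g v n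

lemma orbit_inj (g : WGraph G W) {v : V} {a b : ℕ} (ha : a ≤ wgH g v) (hb : b ≤ wgH g v)
    (h : g.next^[a] v = g.next^[b] v) : a = b := by
  have key : ∀ a b : ℕ, a < b → b ≤ wgH g v → g.next^[a] v = g.next^[b] v → False := by
    intro a b hab hble heq
    have hiter : ∀ r, g.next^[a + r] v = g.next^[b + r] v := by
      intro r
      rw [add_comm a r, add_comm b r, Function.iterate_add_apply, Function.iterate_add_apply,
        heq]
    have h2 := hiter (wgH g v - b)
    have hW : g.next^[b + (wgH g v - b)] v ∈ W := by
      rw [show b + (wgH g v - b) = wgH g v by omega]; exact wgS_mem g v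
    rw [← h2] at hW
    exact wgH_pre g v (by omega) hW
  rcases lt_trichotomy a b with h1 | h1 | h1
  · exact (key a b h1 hb h).elim
  · exact h1
  · exact (key b a h1 ha h.symm).elim

lemma no_two_cycle (g : WGraph G W) {a b : V} (ha : a ∉ W) (h1 : g.next a = b)
    (h2 : g.next b = a) : False := by
  have hb : b ∉ W := by
    intro hb
    have := g.sink_fixed b hb
    rw [this] at h2; rw [h2] at h1; exact wg_next_ne g ha h1
  have hfix : ∀ n, g.next^[n] a = a ∨ g.next^[n] a = b := by
    intro n; induction n with
    | zero => exact Or.inl rfl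
    | succ n ih =>
      rw [Function.iterate_succ_apply']
      rcases ih with h | h <;> rw [h] <;> [exact Or.inr h1; exact Or.inl h2]
  obtain ⟨n, hn⟩ := g.absorbed a
  rcases hfix n with h | h <;> rw [h] at hn <;> [exact ha hn; exact hb hn]

lemma edge_map_inj (g : WGraph G W) {u u' : V} (hu : u ∉ W) (hu' : u' ∉ W)
    (h : s(u, g.next u) = s(u', g.next u')) : u = u' := by
  rw [Sym2.eq_iff] at h
  rcases h with ⟨h1, _⟩ | ⟨h1, h2⟩
  · exact h1
  · exact (no_two_cycle g hu h2 h1.symm).elim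

lemma mem_wEdges {g : WGraph G W} {f : Sym2 V} :
    f ∈ wEdges g ↔ ∃ u, u ∉ W ∧ s(u, g.next u) = f := by
  simp [wEdges, Finset.mem_image]

lemma wEdges_subset (g : WGraph G W) {f : Sym2 V} (hf : f ∈ wEdges g) : f ∈ G.edgeSet := by
  obtain ⟨u, hu, rfl⟩ := mem_wEdges.1 hf
  exact g.adj_of_not_sink u hu

lemma edge_same_sink (g : WGraph G W) {a b : V} (hf : s(a, b) ∈ wEdges g) :
    wgS g a = wgS g b := by
  obtain ⟨u, hu, h⟩ := mem_wEdges.1 hf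
  rw [Sym2.eq_iff] at h
  have key : wgS g u = wgS g (g.next u) := by
    have := wgS_iter g u 1; simpa using this.symm
  rcases h with ⟨h1, h2⟩ | ⟨h1, h2⟩
  · rw [← h1, ← h2]; exact key
  · rw [← h1, ← h2]; exact key.symm

lemma wcost_eq_sum (Ve : Sym2 V → ℝ) (Vp : V → ℝ) (g : WGraph G W) :
    wcost Ve Vp g = (∑ f ∈ wEdges g, Ve f) + (∑ w ∈ W, Vp w) - ∑ v, Vp v := by
  rw [wcost, Finset.sum_sub_distrib]
  have h1 : ∑ f ∈ wEdges g, Ve f = ∑ i ∈ Wᶜ, Ve s(i, g.next i) := by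
    rw [wEdges, Finset.sum_image]
    intro u hu u' hu' h
    exact edge_map_inj g (by simpa using hu) (by simpa using hu') h
  have h2 := Finset.sum_compl_add_sum W Vp
  linarith

end Basics

section Mod
variable {V : Type*} [Fintype V] [DecidableEq V] {G : SimpleGraph V} {W : Finset V}

/-- orbit along `B` starting at `v` -/
def px (B : WGraph G W) (v : V) (j : ℕ) : V := B.next^[j] v

variable (B : WGraph G W) (v i q : V)

/-- length of the path from `v` to `i` -/
def pm (hvi : wgReach B v i) : ℕ := Nat.find hvi

variable (hvi : wgReach B v i)

lemma px_pm : px B v (pm B v i hvi) = i := Nat.find_spec hvi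

lemma px_ne_pre {j : ℕ} (h : j < pm B v i hvi) : px B v j ≠ i := Nat.find_min hvi h

lemma px_inj {a b : ℕ} (ha : a ≤ pm B v i hvi) (hb : b ≤ pm B v i hvi)
    (h : px B v a = px B v b) : a = b := by
  have key : ∀ a b : ℕ, a < b → b ≤ pm B v i hvi → px B v a = px B v b → False := by
    intro a b hab hble heq
    have hiter : ∀ r, px B v (a + r) = px B v (b + r) := by
      intro r
      show B.next^[a+r] v = B.next^[b+r] v
      rw [add_comm a r, add_comm b r, Function.iterate_add_apply, Function.iterate_add_apply]
      exact congrArg _ heq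
    have h2 := hiter (pm B v i hvi - b)
    rw [show b + (pm B v i hvi - b) = pm B v i hvi by omega, px_pm] at h2
    exact px_ne_pre B v i hvi (by omega : a + (pm B v i hvi - b) < pm B v i hvi) h2
  rcases lt_trichotomy a b with h1 | h1 | h1
  · exact (key a b h1 hb h).elim
  · exact h1
  · exact (key b a h1 ha h.symm).elim

lemma px_not_mem_W {j : ℕ} (h : j < pm B v i hvi) : px B v j ∉ W := by
  intro hW
  have : px B v (pm B v i hvi) = px B v j := by
    show B.next^[pm B v i hvi] v = _
    rw [show pm B v i hvi = j + (pm B v i hvi - j) by omega, add_comm,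
      Function.iterate_add_apply]
    exact iter_fixed B hW _
  exact absurd (px_inj B v i hvi le_rfl (le_of_lt h) this) (by omega)

def pathP : Finset V := (Finset.range (pm B v i hvi + 1)).image (px B v)

lemma mem_pathP {u : V} : u ∈ pathP B v i hvi ↔ ∃ j, j ≤ pm B v i hvi ∧ px B v j = u := by
  simp [pathP, Finset.mem_image, Nat.lt_succ_iff]

lemma v_mem_pathP : v ∈ pathP B v i hvi := (mem_pathP B v i hvi).2 ⟨0, Nat.zero_le _, rfl⟩

lemma i_mem_pathP : i ∈ pathP B v i hvi :=
  (mem_pathP B v i hvi).2 ⟨pm B v i hvi, le_rfl, px_pm B v i hvi⟩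

/-- the modified transition function -/
def nextM : V → V := fun u =>
  if hu : ∃ j, j ≤ pm B v i hvi ∧ px B v j = u then
    (if Nat.find hu = 0 then q else px B v (Nat.find hu - 1))
  else B.next u

lemma nextM_path {j : ℕ} (h1 : 1 ≤ j) (hj : j ≤ pm B v i hvi) :
    nextM B v i q hvi (px B v j) = px B v (j - 1) := by
  have hu : ∃ j', j' ≤ pm B v i hvi ∧ px B v j' = px B v j := ⟨j, hj, rfl⟩
  rw [nextM, dif_pos hu]
  have hfind : Nat.find hu = j := by
    have h2 := Nat.find_spec hu
    exact px_inj B v i hvi (le_trans (Nat.find_le ⟨hj, rfl⟩) hj) hj h2.2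
  rw [hfind, if_neg (by omega)]

lemma nextM_v : nextM B v i q hvi v = q := by
  have hu : ∃ j', j' ≤ pm B v i hvi ∧ px B v j' = v := ⟨0, Nat.zero_le _, rfl⟩
  rw [nextM, dif_pos hu]
  have hfind : Nat.find hu = 0 := Nat.le_zero.1 (Nat.find_le ⟨Nat.zero_le _, rfl⟩)
  rw [hfind, if_pos rfl]

lemma nextM_off {u : V} (h : u ∉ pathP B v i hvi) : nextM B v i q hvi u = B.next u := by
  rw [nextM, dif_neg]
  intro hu
  exact h ((mem_pathP B v i hvi).2 hu)

/-- sinks of the modified graph -/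
def WM (W : Finset V) (v i q : V) : Finset V :=
  if q = v then insert v (W.erase i) else W.erase i

lemma erase_subset_WM : W.erase i ⊆ WM W v i q := by
  rw [WM]; split
  · exact Finset.subset_insert _ _
  · exact subset_rfl

include hvi in
lemma v_eq_i_of_mem (hv : v ∈ W) : i = v := by
  obtain ⟨n, hn⟩ := hvi
  rw [iter_fixed B hv] at hn; exact hn.symm

include hvi in
lemma v_not_mem_erase : v ∉ W.erase i := by
  intro h
  exact absurd (v_eq_i_of_mem B v i hvi (Finset.mem_of_mem_erase h)).symm
    (Finset.ne_of_mem_erase h)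

lemma orbit_agree {u : V} (hav : ∀ n, B.next^[n] u ∉ pathP B v i hvi) (n : ℕ) :
    (nextM B v i q hvi)^[n] u = B.next^[n] u := by
  induction n with
  | zero => rfl
  | succ n ih =>
    rw [Function.iterate_succ_apply', Function.iterate_succ_apply', ih,
      nextM_off B v i q hvi (hav n)]

lemma path_reaches_v : ∀ j ≤ pm B v i hvi, (nextM B v i q hvi)^[j] (px B v j) = v := by
  intro j
  induction j with
  | zero => intro _; rfl
  | succ j ih =>
    intro hj
    rw [Function.iterate_succ_apply, nextM_path B v i q hvi (by omega) hj]
    exact ih (by omega)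

variable (hq : q = v ∨ (G.Adj v q ∧ ∀ n, B.next^[n] q ∉ pathP B v i hvi))

include hq in
lemma absorbM_v : ∃ n, (nextM B v i q hvi)^[n] v ∈ WM W v i q := by
  rcases hq with hq | ⟨hadj, hav⟩
  · exact ⟨0, by rw [WM, if_pos hq]; exact Finset.mem_insert_self v _⟩
  · refine ⟨wgH B q + 1, ?_⟩
    rw [Function.iterate_succ_apply, nextM_v, orbit_agree B v i q hvi hav]
    have hb : wgS B q ∈ W := wgS_mem B q
    have hbp : wgS B q ∉ pathP B v i hvi := hav (wgH B q)
    have hbi : wgS B q ≠ i := fun h => hbp (h ▸ i_mem_pathP B v i hvi)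
    exact erase_subset_WM v i q (Finset.mem_erase.2 ⟨hbi, hb⟩)

include hq in
lemma absorbM : ∀ u, ∃ n, (nextM B v i q hvi)^[n] u ∈ WM W v i q := by
  have key : ∀ N u, wgH B u ≤ N → ∃ n, (nextM B v i q hvi)^[n] u ∈ WM W v i q := by
    intro N
    induction N with
    | zero =>
      intro u hu
      -- wgH B u = 0, so u ∈ W
      have huW : u ∈ W := by
        have := wgS_mem B u
        rwa [wgS, Nat.le_zero.1 hu, Function.iterate_zero_apply] at this
      by_cases hp : u ∈ pathP B v i hvi
      · obtain ⟨j, hj, hju⟩ := (mem_pathP B v i hvi).1 hp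
        have hjm : j = pm B v i hvi := by
          by_contra hne
          exact px_not_mem_W B v i hvi (by omega) (hju ▸ huW)
        -- u = i ; i ∈ W
        subst hjm
        rw [px_pm] at hju
        subst hju
        -- u = i : path from i reaches v then absorb
        obtain ⟨n2, hn2⟩ := absorbM_v B v i q hvi hq
        refine ⟨pm B v i hvi + n2, ?_⟩
        rw [add_comm, Function.iterate_add_apply]
        have hpr := path_reaches_v B v i q hvi (pm B v i hvi) le_rfl
        rw [px_pm] at hpr
        rw [hpr]
        exact hn2
      · refine ⟨0, ?_⟩
        have hui : u ≠ i := fun h => hp (h ▸ i_mem_pathP B v i hvi)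
        exact erase_subset_WM v i q (Finset.mem_erase.2 ⟨hui, huW⟩)
    | succ N ih =>
      intro u hu
      by_cases hp : u ∈ pathP B v i hvi
      · obtain ⟨j, hj, hju⟩ := (mem_pathP B v i hvi).1 hp
        obtain ⟨n2, hn2⟩ := absorbM_v B v i q hvi hq
        refine ⟨j + n2, ?_⟩
        rw [add_comm, Function.iterate_add_apply, ← hju,
          path_reaches_v B v i q hvi _ hj]
        exact hn2
      · by_cases huW : u ∈ W
        · refine ⟨0, ?_⟩
          have hui : u ≠ i := fun h => hp (h ▸ i_mem_pathP B v i hvi)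
          exact erase_subset_WM v i q (Finset.mem_erase.2 ⟨hui, huW⟩)
        · obtain ⟨n, hn⟩ := ih (B.next u) (by
            have := wgH_succ B huW; omega)
          refine ⟨n + 1, ?_⟩
          rwa [Function.iterate_succ_apply, nextM_off B v i q hvi hp]
  exact fun u => key (wgH B u) u le_rfl

/-- The modified W-graph -/
def wgMod : WGraph G (WM W v i q) where
  next := nextM B v i q hvi
  adj_of_not_sink := by
    intro u hu
    by_cases hp : u ∈ pathP B v i hvi
    · obtain ⟨j, hj, hju⟩ := (mem_pathP B v i hvi).1 hp
      rcases Nat.eq_zero_or_pos j with h0 | h0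
      · subst h0
        have huv : u = v := hju.symm
        subst huv
        rcases hq with hq' | ⟨hadj, _⟩
        · exact absurd (by rw [WM, if_pos hq']; exact Finset.mem_insert_self u _) hu
        · rw [nextM_v]; exact hadj
      · rw [← hju, nextM_path B v i q hvi h0 hj]
        have hadj := B.adj_of_not_sink (px B v (j-1)) (px_not_mem_W B v i hvi (by omega))
        have : B.next (px B v (j-1)) = px B v j := by
          show B.next (B.next^[j-1] v) = B.next^[j] v
          have hj1 : j - 1 + 1 = j := by omega
          conv_rhs => rw [← hj1]
          rw [Function.iterate_succ_apply']
        rw [this] at hadj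
        exact hadj.symm
    · rw [nextM_off B v i q hvi hp]
      apply B.adj_of_not_sink
      intro huW
      have hui : u ≠ i := fun h => hp (h ▸ i_mem_pathP B v i hvi)
      exact hu (erase_subset_WM v i q (Finset.mem_erase.2 ⟨hui, huW⟩))
  sink_fixed := by
    intro u hu
    rw [WM] at hu
    have hcase : u ∈ W.erase i ∨ (q = v ∧ u = v) := by
      split at hu
      · rcases Finset.mem_insert.1 hu with h | h
        · right; exact ⟨by assumption, h⟩
        · left; exact h
      · left; exact hu
    rcases hcase with h | ⟨hqv, huv⟩
    · have huW : u ∈ W := Finset.mem_of_mem_erase h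
      have hui : u ≠ i := Finset.ne_of_mem_erase h
      have hp : u ∉ pathP B v i hvi := by
        intro hp
        obtain ⟨j, hj, hju⟩ := (mem_pathP B v i hvi).1 hp
        have hjm : j = pm B v i hvi := by
          by_contra hne
          exact px_not_mem_W B v i hvi (by omega) (hju ▸ huW)
        exact hui (by rw [← hju, hjm, px_pm])
      rw [nextM_off B v i q hvi hp]
      exact B.sink_fixed u huW
    · subst huv; rw [nextM_v]; exact hqv
  absorbed := absorbM B v i q hvi hq

lemma mem_WM {u : V} : u ∈ WM W v i q ↔ (u ∈ W.erase i) ∨ (q = v ∧ u = v) := by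
  rw [WM]
  split
  · rename_i h
    simp only [Finset.mem_insert]
    constructor
    · rintro (rfl | hu)
      · exact Or.inr ⟨h, rfl⟩
      · exact Or.inl hu
    · rintro (hu | ⟨-, rfl⟩)
      · exact Or.inr hu
      · exact Or.inl rfl
  · rename_i h
    constructor
    · exact Or.inl
    · rintro (hu | ⟨hq', -⟩)
      · exact hu
      · exact absurd hq' h

lemma px_succ (j : ℕ) : B.next (px B v j) = px B v (j+1) :=
  (Function.iterate_succ_apply' B.next j v).symm

include hq in
lemma wEdges_wgMod (hnew : q ≠ v → s(v, q) ∉ wEdges B) :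
    wEdges (wgMod B v i q hvi hq) =
      (if i ∈ W then wEdges B else (wEdges B).erase s(i, B.next i)) ∪
      (if q = v then (∅ : Finset (Sym2 V)) else {s(v, q)}) := by
  ext f
  constructor
  · intro hf
    obtain ⟨u, hu, hfu⟩ := mem_wEdges.1 hf
    have hnx : (wgMod B v i q hvi hq).next = nextM B v i q hvi := rfl
    rw [hnx] at hfu
    by_cases hp : u ∈ pathP B v i hvi
    · obtain ⟨j, hj, hju⟩ := (mem_pathP B v i hvi).1 hp
      rcases Nat.eq_zero_or_pos j with h0 | h0
      · -- u = v
        subst h0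
        have huv : v = u := hju
        rw [← huv] at hfu hu
        have hqv : q ≠ v := by
          intro hqv
          exact hu ((mem_WM v i q).2 (Or.inr ⟨hqv, rfl⟩))
        rw [nextM_v] at hfu
        rw [if_neg hqv]
        exact Finset.mem_union_right _ (by rw [← hfu]; exact Finset.mem_singleton_self _)
      · -- u = px j, j ≥ 1
        apply Finset.mem_union_left
        rw [← hju, nextM_path B v i q hvi h0 hj] at hfu
        have hj1 : j - 1 < pm B v i hvi := by omega
        have hmem : s(px B v (j-1), B.next (px B v (j-1))) ∈ wEdges B :=
          mem_wEdges.2 ⟨px B v (j-1), px_not_mem_W B v i hvi hj1, rfl⟩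
        have hfeq : f = s(px B v (j-1), B.next (px B v (j-1))) := by
          rw [← hfu, px_succ, show j - 1 + 1 = j by omega, Sym2.eq_swap]
        by_cases hiW : i ∈ W
        · rw [if_pos hiW, hfeq]; exact hmem
        · rw [if_neg hiW, hfeq]
          refine Finset.mem_erase.2 ⟨?_, hmem⟩
          intro heq
          rw [Sym2.eq_iff] at heq
          rcases heq with ⟨h1, h2⟩ | ⟨h1, h2⟩
          · have := px_inj B v i hvi (le_of_lt hj1) le_rfl (by rw [h1, px_pm])
            omega
          · exact no_two_cycle B hiW h1.symm h2
    · -- off path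
      have huW : u ∉ W := by
        intro huW
        have hui : u ≠ i := fun h => hp (h ▸ i_mem_pathP B v i hvi)
        exact hu ((mem_WM v i q).2 (Or.inl (Finset.mem_erase.2 ⟨hui, huW⟩)))
      rw [nextM_off B v i q hvi hp] at hfu
      apply Finset.mem_union_left
      have hmem : f ∈ wEdges B := mem_wEdges.2 ⟨u, huW, hfu⟩
      by_cases hiW : i ∈ W
      · rw [if_pos hiW]; exact hmem
      · rw [if_neg hiW]
        refine Finset.mem_erase.2 ⟨?_, hmem⟩
        intro heq
        rw [← hfu, Sym2.eq_iff] at heq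
        rcases heq with ⟨h1, h2⟩ | ⟨h1, h2⟩
        · exact hp (h1 ▸ i_mem_pathP B v i hvi)
        · exact no_two_cycle B hiW h1.symm h2
  · intro hf
    rcases Finset.mem_union.1 hf with hf | hf
    · -- old edge, not the cut edge
      have hfB : f ∈ wEdges B ∧ (i ∉ W → f ≠ s(i, B.next i)) := by
        by_cases hiW : i ∈ W
        · rw [if_pos hiW] at hf; exact ⟨hf, fun h => absurd hiW h⟩
        · rw [if_neg hiW] at hf
          exact ⟨Finset.mem_of_mem_erase hf, fun _ => Finset.ne_of_mem_erase hf⟩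
      obtain ⟨u, huW, hfu⟩ := mem_wEdges.1 hfB.1
      by_cases hp : u ∈ pathP B v i hvi
      · obtain ⟨j, hj, hju⟩ := (mem_pathP B v i hvi).1 hp
        have hjm : j ≠ pm B v i hvi := by
          intro hjm
          have hui : u = i := by rw [← hju, hjm, px_pm]
          have hiW : i ∉ W := hui ▸ huW
          exact hfB.2 hiW (by rw [← hfu, hui])
        have hjlt : j < pm B v i hvi := lt_of_le_of_ne hj hjm
        -- use u' = px (j+1)
        refine mem_wEdges.2 ⟨px B v (j+1), ?_, ?_⟩
        · intro hmem
          rcases (mem_WM v i q).1 hmem with hmem | ⟨-, hmem⟩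
          · have hW : px B v (j+1) ∈ W := Finset.mem_of_mem_erase hmem
            have : j + 1 = pm B v i hvi := by
              by_contra hne
              exact px_not_mem_W B v i hvi (by omega) hW
            exact Finset.ne_of_mem_erase hmem (by rw [this, px_pm])
          · have := px_inj B v i hvi (by omega) (Nat.zero_le _) hmem
            omega
        · show s(px B v (j+1), (wgMod B v i q hvi hq).next (px B v (j+1))) = f
          have : (wgMod B v i q hvi hq).next (px B v (j+1)) = px B v j := by
            show nextM B v i q hvi (px B v (j+1)) = px B v j
            rw [nextM_path B v i q hvi (by omega) (by omega)]
            congr 1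
          rw [this, ← hfu, ← hju, Sym2.eq_swap, px_succ]
      · -- off path: same arrow survives
        refine mem_wEdges.2 ⟨u, ?_, ?_⟩
        · intro hmem
          rcases (mem_WM v i q).1 hmem with hmem | ⟨-, hmem⟩
          · exact huW (Finset.mem_of_mem_erase hmem)
          · exact hp (hmem ▸ v_mem_pathP B v i hvi)
        · show s(u, (wgMod B v i q hvi hq).next u) = f
          rw [show (wgMod B v i q hvi hq).next u = B.next u from nextM_off B v i q hvi hp]
          exact hfu
    · -- new edge
      have hqv : q ≠ v := by
        intro hqv; rw [if_pos hqv] at hf; exact absurd hf (Finset.notMem_empty f)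
      rw [if_neg hqv, Finset.mem_singleton] at hf
      refine mem_wEdges.2 ⟨v, ?_, ?_⟩
      · intro hmem
        rcases (mem_WM v i q).1 hmem with hmem | ⟨h, -⟩
        · exact v_not_mem_erase B v i hvi hmem
        · exact hqv h
      · show s(v, (wgMod B v i q hvi hq).next v) = f
        rw [show (wgMod B v i q hvi hq).next v = q from nextM_v B v i q hvi, hf]

include hvi in
lemma sum_WM (f : V → ℝ) :
    ∑ u ∈ WM W v i q, f u
      = (∑ u ∈ W, f u) + (if q = v then f v else 0) - (if i ∈ W then f i else 0) := by
  have herase : ∑ u ∈ W.erase i, f u = (∑ u ∈ W, f u) - (if i ∈ W then f i else 0) := by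
    by_cases hiW : i ∈ W
    · rw [if_pos hiW, Finset.sum_erase_eq_sub hiW]
    · rw [if_neg hiW, Finset.erase_eq_of_notMem hiW, sub_zero]
  rw [WM]
  split
  · rw [Finset.sum_insert (v_not_mem_erase B v i hvi), herase]
    ring
  · rw [herase]
    ring

include hq in
lemma wcost_wgMod (Ve : Sym2 V → ℝ) (Vp : V → ℝ) (hnew : q ≠ v → s(v, q) ∉ wEdges B) :
    wcost Ve Vp (wgMod B v i q hvi hq) = wcost Ve Vp B
      - (if i ∈ W then 0 else Ve s(i, B.next i))
      + (if q = v then 0 else Ve s(v, q))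
      + (if q = v then Vp v else 0)
      - (if i ∈ W then Vp i else 0) := by
  rw [wcost_eq_sum, wcost_eq_sum, wEdges_wgMod B v i q hvi hq hnew,
    sum_WM B v i q hvi Vp]
  have hedge : ∑ f ∈ ((if i ∈ W then wEdges B else (wEdges B).erase s(i, B.next i)) ∪
      (if q = v then (∅ : Finset (Sym2 V)) else {s(v, q)})), Ve f
      = (∑ f ∈ wEdges B, Ve f) - (if i ∈ W then 0 else Ve s(i, B.next i))
        + (if q = v then 0 else Ve s(v, q)) := by
    have hsub : (if i ∈ W then wEdges B else (wEdges B).erase s(i, B.next i)) ⊆ wEdges B := by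
      split
      · exact subset_rfl
      · exact Finset.erase_subset _ _
    have hleft : ∑ f ∈ (if i ∈ W then wEdges B else (wEdges B).erase s(i, B.next i)), Ve f
        = (∑ f ∈ wEdges B, Ve f) - (if i ∈ W then 0 else Ve s(i, B.next i)) := by
      by_cases hiW : i ∈ W
      · rw [if_pos hiW, if_pos hiW, sub_zero]
      · rw [if_neg hiW, if_neg hiW, Finset.sum_erase_eq_sub]
        exact mem_wEdges.2 ⟨i, hiW, rfl⟩
    by_cases hqv : q = v
    · rw [if_pos hqv, if_pos hqv, Finset.union_empty, hleft, add_zero]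
    · rw [if_neg hqv, if_neg hqv, Finset.sum_union, hleft, Finset.sum_singleton]
      rw [Finset.disjoint_singleton_right]
      exact fun h => (hnew hqv) (hsub h)
  rw [hedge]
  ring

end Mod

section Usage
variable {V : Type*} [Fintype V] [DecidableEq V] {G : SimpleGraph V}
variable (Ve : Sym2 V → ℝ) (Vp : V → ℝ)
variable {WB : Finset V} (B : WGraph G WB) (c : ℝ)

lemma pathP_sink {v i u : V} (hvi : wgReach B v i) (hu : u ∈ pathP B v i hvi) :
    wgS B u = wgS B v := by
  obtain ⟨j, _, hju⟩ := (mem_pathP B v i hvi).1 hu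
  rw [← hju]
  exact wgS_iter B v j

lemma avoid_of_sink_ne {v i z : V} (hvi : wgReach B v i) (hz : wgS B z ≠ wgS B v) :
    ∀ n, B.next^[n] z ∉ pathP B v i hvi := by
  intro n hmem
  have h1 := pathP_sink B hvi hmem
  rw [wgS_iter B z n] at h1
  exact hz h1

lemma pm_orbit {v : V} {j : ℕ} (hj : j ≤ wgH B v) (hvi : wgReach B v (B.next^[j] v)) :
    pm B v (B.next^[j] v) hvi = j := by
  have h1 : pm B v (B.next^[j] v) hvi ≤ j := Nat.find_le rfl
  have h2 := px_pm B v (B.next^[j] v) hvi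
  exact orbit_inj B (le_trans h1 hj) hj h2

/-- cutting the arrow at `i` and redirecting the new component into sink `v`:
a `(card+1)`-sink graph of cost `cost B - Ve(i, next i) + Vp v`. -/
lemma use_split
    (hopt : ∀ (W0 : Finset V) (g0 : WGraph G W0), W0.card = WB.card + 1 → c ≤ wcost Ve Vp g0)
    {i v : V} (hvi : wgReach B v i) (hi : i ∉ WB) (hv : v ∉ WB) :
    c ≤ wcost Ve Vp B - Ve s(i, B.next i) + Vp v := by
  have hcost := wcost_wgMod B v i v hvi (Or.inl rfl) Ve Vp (fun h => absurd rfl h)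
  have hcard : (WM WB v i v).card = WB.card + 1 := by
    rw [WM, if_pos rfl, Finset.card_insert_of_notMem (v_not_mem_erase B v i hvi),
      Finset.erase_eq_of_notMem hi]
  have h := hopt _ (wgMod B v i v hvi (Or.inl rfl)) hcard
  rw [hcost, if_neg hi, if_pos rfl, if_pos rfl, if_neg hi] at h
  linarith

/-- re-routing the component of `v` to have sink `v` instead of `wgS B v`:
a graph with the same number of sinks and cost `cost B + Vp v - Vp (wgS B v)`. -/
lemma use_resink
    (hopt : ∀ (W0 : Finset V) (g0 : WGraph G W0), W0.card = WB.card → c ≤ wcost Ve Vp g0)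
    {v : V} (hv : v ∉ WB) :
    c ≤ wcost Ve Vp B + Vp v - Vp (wgS B v) := by
  have hvi : wgReach B v (wgS B v) := ⟨wgH B v, rfl⟩
  have hiW : wgS B v ∈ WB := wgS_mem B v
  have hcost := wcost_wgMod B v (wgS B v) v hvi (Or.inl rfl) Ve Vp (fun h => absurd rfl h)
  have hcard : (WM WB v (wgS B v) v).card = WB.card := by
    rw [WM, if_pos rfl, Finset.card_insert_of_notMem (v_not_mem_erase B v _ hvi),
      Finset.card_erase_of_mem hiW]
    have : 1 ≤ WB.card := Finset.card_pos.2 ⟨_, hiW⟩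
    omega
  have h := hopt _ (wgMod B v (wgS B v) v hvi (Or.inl rfl)) hcard
  rw [hcost, if_pos hiW, if_pos rfl, if_pos rfl, if_pos hiW] at h
  linarith

/-- merging the component of `v` into the rest through the edge `(v, z)`:
a `(card-1)`-sink graph of cost `cost B + Ve(v,z) - Vp (wgS B v)`. -/
lemma use_merge
    (hopt : ∀ (W0 : Finset V) (g0 : WGraph G W0), W0.card = WB.card - 1 → c ≤ wcost Ve Vp g0)
    {v z : V} (hadj : G.Adj v z) (hsink : wgS B z ≠ wgS B v) (hnew : s(v, z) ∉ wEdges B) :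
    c ≤ wcost Ve Vp B + Ve s(v, z) - Vp (wgS B v) := by
  have hvi : wgReach B v (wgS B v) := ⟨wgH B v, rfl⟩
  have hiW : wgS B v ∈ WB := wgS_mem B v
  have hzv : ¬ (z = v) := fun h => hadj.ne h.symm
  have hq : z = v ∨ (G.Adj v z ∧ ∀ n, B.next^[n] z ∉ pathP B v (wgS B v) hvi) :=
    Or.inr ⟨hadj, avoid_of_sink_ne B hvi hsink⟩
  have hcost := wcost_wgMod B v (wgS B v) z hvi hq Ve Vp (fun _ => hnew)
  have hcard : (WM WB v (wgS B v) z).card = WB.card - 1 := by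
    rw [WM, if_neg hzv, Finset.card_erase_of_mem hiW]
  have h := hopt _ (wgMod B v (wgS B v) z hvi hq) hcard
  rw [hcost, if_pos hiW, if_neg hzv, if_neg hzv, if_pos hiW] at h
  linarith

/-- exchanging the arrow at `i` (on the path from `v`) for the edge `(v,z)`:
a graph with the same sinks count and cost `cost B - Ve(i, next i) + Ve(v,z)`. -/
lemma use_swap
    (hopt : ∀ (W0 : Finset V) (g0 : WGraph G W0), W0.card = WB.card → c ≤ wcost Ve Vp g0)
    {i v z : V} (hvi : wgReach B v i) (hiW : i ∉ WB) (hadj : G.Adj v z)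
    (hav : ∀ n, B.next^[n] z ∉ pathP B v i hvi) (hnew : s(v, z) ∉ wEdges B) :
    c ≤ wcost Ve Vp B - Ve s(i, B.next i) + Ve s(v, z) := by
  have hzv : ¬ (z = v) := fun h => hadj.ne h.symm
  have hq : z = v ∨ (G.Adj v z ∧ ∀ n, B.next^[n] z ∉ pathP B v i hvi) := Or.inr ⟨hadj, hav⟩
  have hcost := wcost_wgMod B v i z hvi hq Ve Vp (fun _ => hnew)
  have hcard : (WM WB v i z).card = WB.card := by
    rw [WM, if_neg hzv, Finset.erase_eq_of_notMem hiW]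
  have h := hopt _ (wgMod B v i z hvi hq) hcard
  rw [hcost, if_neg hiW, if_neg hzv, if_neg hzv, if_neg hiW] at h
  linarith

end Usage

section Cycle
variable {V : Type*} [Fintype V] [DecidableEq V] {G : SimpleGraph V} {W : Finset V}

lemma edge_next (A : WGraph G W) {a b : V} (h : s(a, b) ∈ wEdges A)
    (hh : wgH A b ≤ wgH A a) : A.next a = b := by
  obtain ⟨w, hwW, heq⟩ := mem_wEdges.1 h
  rw [Sym2.eq_iff] at heq
  rcases heq with ⟨rfl, rfl⟩ | ⟨h1, h2⟩
  · rfl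
  · subst h1; subst h2
    have := wgH_succ A hwW
    -- wgH A w = wgH A (A.next w) + 1, b = w, a = A.next w
    omega

lemma path_edge_cycle (A : WGraph G W) {L : ℕ} (hL : 2 ≤ L) (u : ℕ → V)
    (hinj : ∀ a b, a ≤ L → b ≤ L → u a = u b → a = b)
    (hedges : ∀ j, j < L → s(u j, u (j+1)) ∈ wEdges A)
    (hclose : s(u 0, u L) ∈ wEdges A) : False := by
  obtain ⟨j, hjmem, hjmax⟩ := Finset.exists_max_image (Finset.range (L+1))
    (fun j => wgH A (u j)) ⟨0, Finset.mem_range.2 (by omega)⟩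
  rw [Finset.mem_range, Nat.lt_succ_iff] at hjmem
  have hmax : ∀ a, a ≤ L → wgH A (u a) ≤ wgH A (u j) := by
    intro a ha
    exact hjmax a (Finset.mem_range.2 (by omega))
  rcases Nat.eq_zero_or_pos j with rfl | hj0
  · -- j = 0 : neighbours u 1 and u L
    have e1 : A.next (u 0) = u 1 := edge_next A (hedges 0 (by omega)) (hmax 1 (by omega))
    have e2 : A.next (u 0) = u L := edge_next A hclose (hmax L le_rfl)
    have := hinj 1 L (by omega) le_rfl (e1 ▸ e2)
    omega
  · rcases eq_or_lt_of_le hjmem with rfl | hjL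
    · -- j = L
      have e1 : A.next (u j) = u (j-1) := by
        apply edge_next A
        · rw [Sym2.eq_swap]
          have := hedges (j-1) (by omega)
          rwa [show j - 1 + 1 = j by omega] at this
        · exact hmax (j-1) (by omega)
      have e2 : A.next (u j) = u 0 := by
        apply edge_next A
        · rw [Sym2.eq_swap]; exact hclose
        · exact hmax 0 (by omega)
      have := hinj (j-1) 0 (by omega) (by omega) (e1 ▸ e2)
      omega
    · -- interior
      have e1 : A.next (u j) = u (j-1) := by
        apply edge_next A
        · rw [Sym2.eq_swap]
          have := hedges (j-1) (by omega)
          rwa [show j - 1 + 1 = j by omega] at this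
        · exact hmax (j-1) (by omega)
      have e2 : A.next (u j) = u (j+1) :=
        edge_next A (hedges j hjL) (hmax (j+1) (by omega))
      have := hinj (j-1) (j+1) (by omega) (by omega) (e1 ▸ e2)
      omega

lemma wgH_iter (B : WGraph G W) (v : V) {j : ℕ} (hj : j ≤ wgH B v) :
    wgH B (B.next^[j] v) = wgH B v - j := by
  induction j with
  | zero => simp
  | succ j ih =>
    have hjlt : j < wgH B v := by omega
    have hW : B.next^[j] v ∉ W := wgH_pre B v hjlt
    have hs := wgH_succ B hW
    rw [Function.iterate_succ_apply'] at *
    have := ih (by omega)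
    omega

lemma chain_sink {WA' : Finset V} (Bk : WGraph G W) (A : WGraph G WA') (v : V)
    (h : ∀ j, j < wgH Bk v → s(Bk.next^[j] v, Bk.next^[j+1] v) ∈ wEdges A) :
    wgS A v = wgS A (wgS Bk v) := by
  have key : ∀ j, j ≤ wgH Bk v → wgS A (Bk.next^[j] v) = wgS A v := by
    intro j
    induction j with
    | zero => intro _; rfl
    | succ j ih =>
      intro hj
      have := edge_same_sink A (h j (by omega))
      rw [← this, ih (by omega)]
  exact (key (wgH Bk v) le_rfl).symm

end Cycle

section Core
variable {V : Type*} [Fintype V] [DecidableEq V] {G : SimpleGraph V}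
variable {Ve : Sym2 V → ℝ} {Vp : V → ℝ} {k : ℕ} {ck c1 : ℝ} {f1 : Sym2 V} {s : V}
variable {WA WB WA1 WB1 : Finset V}

def Generic' (G : SimpleGraph V) (Ve : Sym2 V → ℝ) (Vp : V → ℝ) : Prop :=
  Function.Injective Vp ∧
  (∀ e ∈ G.edgeSet, ∀ f ∈ G.edgeSet, Ve e = Ve f → e = f) ∧
  (∀ e ∈ G.edgeSet, ∀ f ∈ G.edgeSet, ∀ i j : V,
      Ve e - Vp i = Ve f - Vp j → e = f ∧ i = j)

lemma subA
    (hgen : Generic' G Ve Vp)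
    (hoptk : ∀ (W0 : Finset V) (g0 : WGraph G W0), W0.card = k → ck ≤ wcost Ve Vp g0)
    (hopt1 : ∀ (W0 : Finset V) (g0 : WGraph G W0), W0.card = k + 1 → c1 ≤ wcost Ve Vp g0)
    (hf1G : f1 ∈ G.edgeSet) (hD : ck - c1 = Ve f1 - Vp s)
    (Ak : WGraph G WA) (Bk : WGraph G WB)
    (hcB : wcost Ve Vp Bk = ck) (hkB : WB.card = k)
    {v : V} (hvA : v ∈ WA) (hvB : v ∉ WB) (hvs : v ≠ s)
    (hminE : ∀ h ∈ (wEdges Ak \ wEdges Bk) ∪ (wEdges Bk \ wEdges Ak),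
      Vp v + (ck - c1) ≤ Ve h)
    (hminV : ∀ u ∈ (WA \ WB) ∪ (WB \ WA), Vp v ≤ Vp u) : False := by
  obtain ⟨hVp, hVe2, hVe3⟩ := hgen
  have harr : ∀ j, j < wgH Bk v → s(Bk.next^[j] v, Bk.next^[j+1] v) ∈ wEdges Ak := by
    intro j hj
    have hiW : Bk.next^[j] v ∉ WB := wgH_pre Bk v hj
    have hsp := use_split Ve Vp Bk c1 (fun W0 g0 h0 => hopt1 W0 g0 (by omega))
      (⟨j, rfl⟩ : wgReach Bk v (Bk.next^[j] v)) hiW hvB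
    rw [hcB] at hsp
    have hedge : s(Bk.next^[j] v, Bk.next (Bk.next^[j] v)) ∈ wEdges Bk :=
      mem_wEdges.2 ⟨_, hiW, rfl⟩
    have hle : Ve s(Bk.next^[j] v, Bk.next (Bk.next^[j] v)) ≤ Vp v + (ck - c1) := by
      linarith
    have hlt : Ve s(Bk.next^[j] v, Bk.next (Bk.next^[j] v)) < Vp v + (ck - c1) := by
      rcases lt_or_eq_of_le hle with h | h
      · exact h
      · exfalso
        have hdiff : Ve s(Bk.next^[j] v, Bk.next (Bk.next^[j] v)) - Vp v = Ve f1 - Vp s := by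
          rw [← hD]; linarith
        exact hvs ((hVe3 _ (wEdges_subset Bk hedge) f1 hf1G v s hdiff).2)
    have hmemA : s(Bk.next^[j] v, Bk.next (Bk.next^[j] v)) ∈ wEdges Ak := by
      by_contra hnA
      exact absurd (hminE _ (Finset.mem_union_right _ (Finset.mem_sdiff.2 ⟨hedge, hnA⟩)))
        (not_le.2 hlt)
    rwa [Function.iterate_succ_apply' Bk.next j v]
  have hres := use_resink Ve Vp Bk ck (fun W0 g0 h0 => hoptk W0 g0 (by omega)) hvB
  rw [hcB] at hres
  have hbW : wgS Bk v ∈ WB := wgS_mem Bk v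
  have hbv : wgS Bk v ≠ v := fun h => hvB (h ▸ hbW)
  have hblt : Vp (wgS Bk v) < Vp v :=
    lt_of_le_of_ne (by linarith) (fun h => hbv (hVp h))
  have hbA : wgS Bk v ∈ WA := by
    by_contra hbA
    exact absurd (hminV _ (Finset.mem_union_right _ (Finset.mem_sdiff.2 ⟨hbW, hbA⟩)))
      (not_le.2 hblt)
  have hchain := chain_sink Bk Ak v harr
  rw [wgS_fixed Ak hvA, wgS_fixed Ak hbA] at hchain
  exact hbv hchain.symm

lemma subE
    (hgen : Generic' G Ve Vp)
    (hoptk : ∀ (W0 : Finset V) (g0 : WGraph G W0), W0.card = k → ck ≤ wcost Ve Vp g0)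
    (hopt1 : ∀ (W0 : Finset V) (g0 : WGraph G W0), W0.card = k + 1 → c1 ≤ wcost Ve Vp g0)
    (hf1G : f1 ∈ G.edgeSet) (hD : ck - c1 = Ve f1 - Vp s)
    (Ak : WGraph G WA) (Bk : WGraph G WB) (A1 : WGraph G WA1) (B1 : WGraph G WB1)
    (hcB1 : wcost Ve Vp B1 = c1) (hkB1 : WB1.card = k + 1)
    (hEA : wEdges Ak = wEdges A1 ∪ {f1}) (hEB : wEdges Bk = wEdges B1 ∪ {f1})
    (hfnB1 : f1 ∉ wEdges B1)
    (hWA1 : WA1 = insert s WA) (hWB1 : WB1 = insert s WB)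
    {f : Sym2 V} (hfA : f ∈ wEdges Ak) (hfB : f ∉ wEdges Bk)
    (hminE : ∀ h ∈ (wEdges Ak \ wEdges Bk) ∪ (wEdges Bk \ wEdges Ak), Ve f ≤ Ve h)
    (hminV : ∀ u ∈ (WA \ WB) ∪ (WB \ WA), Ve f ≤ Vp u + (ck - c1)) : False := by
  obtain ⟨hVp, hVe2, hVe3⟩ := hgen
  have hff1 : f ≠ f1 := by
    rintro rfl
    exact hfB (by rw [hEB]; exact Finset.mem_union_right _ (Finset.mem_singleton_self _))
  have hfA1 : f ∈ wEdges A1 := by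
    rw [hEA] at hfA
    rcases Finset.mem_union.1 hfA with h | h
    · exact h
    · exact absurd (Finset.mem_singleton.1 h) hff1
  have hfnB1' : f ∉ wEdges B1 := fun h => hfB (by rw [hEB]; exact Finset.mem_union_left _ h)
  have hfG : f ∈ G.edgeSet := wEdges_subset Ak hfA
  obtain ⟨z1, hz1, hfz⟩ := mem_wEdges.1 hfA
  obtain ⟨z2, hz2def⟩ : ∃ z, z = Ak.next z1 := ⟨_, rfl⟩
  have hadj : G.Adj z1 z2 := hz2def ▸ Ak.adj_of_not_sink z1 hz1
  have hz12 : z1 ≠ z2 := hadj.ne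
  have hfz2 : s(z1, z2) = f := by rw [hz2def]; exact hfz
  have hfz2' : s(z2, z1) = f := by rw [Sym2.eq_swap]; exact hfz2
  -- strictness helper
  have hstrict : ∀ h : Sym2 V, h ∈ wEdges B1 → Ve h ≤ Ve f → Ve h < Ve f := by
    intro h hh hle
    rcases lt_or_eq_of_le hle with h' | h'
    · exact h'
    · exact absurd (hVe2 h (wEdges_subset B1 hh) f hfG h' ▸ hh) hfnB1'
  -- transfer helper: B1-edges cheaper than f lie in A1
  have htrans : ∀ h : Sym2 V, h ∈ wEdges B1 → Ve h < Ve f → h ∈ wEdges A1 := by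
    intro h hh hlt
    have hBk : h ∈ wEdges Bk := by rw [hEB]; exact Finset.mem_union_left _ hh
    have hAk : h ∈ wEdges Ak := by
      by_contra hnA
      exact absurd (hminE h (Finset.mem_union_right _ (Finset.mem_sdiff.2 ⟨hBk, hnA⟩)))
        (not_le.2 hlt)
    rw [hEA] at hAk
    rcases Finset.mem_union.1 hAk with h' | h'
    · exact h'
    · exact absurd (Finset.mem_singleton.1 h' ▸ hh) hfnB1
  by_cases hbb : wgS B1 z1 = wgS B1 z2
  · -- same component in B1 : cycle argument
    have hOy : ∀ u : V, u ∈ (Finset.range (wgH B1 z2 + 1)).image (fun n => B1.next^[n] z2)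
        ↔ ∃ n, n ≤ wgH B1 z2 ∧ B1.next^[n] z2 = u := by
      intro u; simp [Finset.mem_image, Nat.lt_succ_iff]
    have hex : ∃ j, j ≤ wgH B1 z1 ∧
        (B1.next^[j] z1) ∈ (Finset.range (wgH B1 z2 + 1)).image (fun n => B1.next^[n] z2) := by
      refine ⟨wgH B1 z1, le_rfl, (hOy _).2 ⟨wgH B1 z2, le_rfl, hbb.symm⟩⟩
    obtain ⟨r1, ⟨hr1h, hr1mem⟩, hFa⟩ : ∃ r, (r ≤ wgH B1 z1 ∧
        (B1.next^[r] z1) ∈ (Finset.range (wgH B1 z2 + 1)).image (fun n => B1.next^[n] z2)) ∧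
        ∀ j, j < r → (B1.next^[j] z1) ∉
          (Finset.range (wgH B1 z2 + 1)).image (fun n => B1.next^[n] z2) := by
      refine ⟨Nat.find hex, Nat.find_spec hex, ?_⟩
      intro j hj hmem
      have hjh : j ≤ wgH B1 z1 := by
        have := (Nat.find_spec hex).1
        omega
      exact Nat.find_min hex hj ⟨hjh, hmem⟩
    have hex2 : ∃ n, n ≤ wgH B1 z2 ∧ B1.next^[n] z2 = B1.next^[r1] z1 := (hOy _).1 hr1mem
    obtain ⟨r2, ⟨hr2h, hmeet⟩, hFb⟩ : ∃ r, (r ≤ wgH B1 z2 ∧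
        B1.next^[r] z2 = B1.next^[r1] z1) ∧
        ∀ n, n < r → B1.next^[n] z2 ≠ B1.next^[r1] z1 := by
      refine ⟨Nat.find hex2, Nat.find_spec hex2, ?_⟩
      intro n hn hne
      have hnh : n ≤ wgH B1 z2 := by
        have := (Nat.find_spec hex2).1
        omega
      exact Nat.find_min hex2 hn ⟨hnh, hne⟩
    -- path vertices are not sinks
    have hXW : ∀ j, j < r1 → B1.next^[j] z1 ∉ WB1 := by
      intro j hj hmem
      have hfix := wgReach_sink_eq B1 (⟨j, rfl⟩ : wgReach B1 z1 _) hmem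
      refine hFa j hj ((hOy _).2 ⟨wgH B1 z2, le_rfl, ?_⟩)
      rw [hfix, hbb]
      rfl
    have hYW : ∀ n, n < r2 → B1.next^[n] z2 ∉ WB1 := by
      intro n hn hmem
      apply hFb n hn
      rw [← hmeet]
      have hsplit : B1.next^[r2] z2 = B1.next^[r2 - n] (B1.next^[n] z2) := by
        rw [← Function.iterate_add_apply]
        congr 1; omega
      rw [hsplit, iter_fixed B1 hmem]
    -- orbit merge after the meeting point
    have hmerge : ∀ d, B1.next^[r1 + d] z1 = B1.next^[r2 + d] z2 := by
      intro d
      induction d with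
      | zero => simpa using hmeet.symm
      | succ d ih =>
        rw [show r1 + (d+1) = (r1 + d) + 1 by omega, show r2 + (d+1) = (r2 + d) + 1 by omega,
          Function.iterate_succ_apply', Function.iterate_succ_apply', ih]
    have htails : wgH B1 z1 - r1 = wgH B1 z2 - r2 := by
      have t1 := wgH_iter B1 z1 hr1h
      have t2 := wgH_iter B1 z2 hr2h
      rw [← hmeet] at t1
      rw [t2] at t1
      omega
    -- cross disjointness
    have hcross : ∀ j, j ≤ r1 → ∀ n, n < r2 → B1.next^[j] z1 ≠ B1.next^[n] z2 := by
      intro j hj n hn heq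
      rcases eq_or_lt_of_le hj with heq' | hjlt
      · subst heq'
        exact hFb n hn heq.symm
      · exact hFa j hjlt ((hOy _).2 ⟨n, by omega, heq.symm⟩)
    -- no vertex of the x-orbit equals an early y-vertex
    have hXallY : ∀ c : ℕ, ∀ n, n < r2 → B1.next^[c] z1 ≠ B1.next^[n] z2 := by
      intro c n hn heq
      rcases le_or_gt c r1 with hc | hc
      · exact hcross c hc n hn heq
      · rcases le_or_gt c (wgH B1 z1) with hch | hch
        · have hc' : B1.next^[c] z1 = B1.next^[r2 + (c - r1)] z2 := by
            have := hmerge (c - r1)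
            rwa [show r1 + (c - r1) = c by omega] at this
          rw [hc'] at heq
          have := orbit_inj B1 (a := r2 + (c - r1)) (b := n) (by omega) (by omega) heq
          omega
        · have hc0 : B1.next^[c] z1 = B1.next^[wgH B1 z1] z1 := wgS_past B1 z1 (by omega)
          have hc' : B1.next^[wgH B1 z1] z1 = B1.next^[r2 + (wgH B1 z1 - r1)] z2 := by
            have := hmerge (wgH B1 z1 - r1)
            rwa [show r1 + (wgH B1 z1 - r1) = wgH B1 z1 by omega] at this
          rw [hc0, hc'] at heq
          have := orbit_inj B1 (a := r2 + (wgH B1 z1 - r1)) (b := n) (by omega) (by omega) heq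
          omega
    -- arrows along the z1-side of the path are in A1
    have harrX : ∀ j, j < r1 → s(B1.next^[j] z1, B1.next^[j+1] z1) ∈ wEdges A1 := by
      intro j hj
      have hiW := hXW j hj
      have hvi : wgReach B1 z1 (B1.next^[j] z1) := ⟨j, rfl⟩
      have hav : ∀ n, B1.next^[n] z2 ∉ pathP B1 z1 (B1.next^[j] z1) hvi := by
        intro n hmem
        obtain ⟨a, ha, hau⟩ := (mem_pathP B1 z1 _ hvi).1 hmem
        have hpm : pm B1 z1 (B1.next^[j] z1) hvi ≤ j := Nat.find_le rfl
        rcases le_or_gt n (wgH B1 z2) with hn | hn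
        · exact hFa a (by omega) ((hOy _).2 ⟨n, hn, hau.symm⟩)
        · have hval : B1.next^[n] z2 = B1.next^[wgH B1 z2] z2 := wgS_past B1 z2 (by omega)
          rw [hval] at hau
          exact hFa a (by omega) ((hOy _).2 ⟨wgH B1 z2, le_rfl, hau.symm⟩)
      have hsw := use_swap Ve Vp B1 c1 (fun W0 g0 h0 => hopt1 W0 g0 (by omega))
        hvi hiW hadj hav (hfz2 ▸ hfnB1')
      rw [hcB1] at hsw
      have hedge : s(B1.next^[j] z1, B1.next (B1.next^[j] z1)) ∈ wEdges B1 :=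
        mem_wEdges.2 ⟨_, hiW, rfl⟩
      have hlt := hstrict _ hedge (by rw [← hfz2]; linarith)
      have := htrans _ hedge hlt
      rwa [Function.iterate_succ_apply' B1.next j z1]
    -- arrows along the z2-side of the path are in A1
    have harrY : ∀ n, n < r2 → s(B1.next^[n] z2, B1.next^[n+1] z2) ∈ wEdges A1 := by
      intro n hn
      have hiW := hYW n hn
      have hvi : wgReach B1 z2 (B1.next^[n] z2) := ⟨n, rfl⟩
      have hav : ∀ c, B1.next^[c] z1 ∉ pathP B1 z2 (B1.next^[n] z2) hvi := by
        intro c hmem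
        obtain ⟨a, ha, hau⟩ := (mem_pathP B1 z2 _ hvi).1 hmem
        have hpm : pm B1 z2 (B1.next^[n] z2) hvi ≤ n := Nat.find_le rfl
        exact hXallY c a (by omega) hau.symm
      have hsw := use_swap Ve Vp B1 c1 (fun W0 g0 h0 => hopt1 W0 g0 (by omega))
        hvi hiW hadj.symm hav (hfz2' ▸ hfnB1')
      rw [hcB1] at hsw
      have hedge : s(B1.next^[n] z2, B1.next (B1.next^[n] z2)) ∈ wEdges B1 :=
        mem_wEdges.2 ⟨_, hiW, rfl⟩
      have hlt := hstrict _ hedge (by rw [← hfz2']; linarith)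
      have := htrans _ hedge hlt
      rwa [Function.iterate_succ_apply' B1.next n z2]
    -- build the cycle
    obtain ⟨u, hudef⟩ : ∃ u : ℕ → V,
        u = fun j => if j ≤ r1 then B1.next^[j] z1 else B1.next^[r2 - (j - r1)] z2 :=
      ⟨_, rfl⟩
    have huval1 : ∀ j, j ≤ r1 → u j = B1.next^[j] z1 := by
      intro j hj; rw [hudef]; simp only [if_pos hj]
    have huval2 : ∀ j, r1 < j → u j = B1.next^[r2 - (j - r1)] z2 := by
      intro j hj; rw [hudef]; simp only [if_neg (by omega : ¬ j ≤ r1)]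
    have hu0 : u 0 = z1 := huval1 0 (by omega)
    have huL : u (r1 + r2) = z2 := by
      rcases Nat.eq_zero_or_pos r2 with h2 | h2
      · rw [show r1 + r2 = r1 by omega, huval1 r1 le_rfl, ← hmeet, h2]
        rfl
      · rw [huval2 _ (by omega), show r2 - (r1 + r2 - r1) = 0 by omega]
        rfl
    have hL2 : 2 ≤ r1 + r2 := by
      by_contra hL
      push_neg at hL
      rcases Nat.eq_zero_or_pos r1 with h1 | h1
      · rcases Nat.eq_zero_or_pos r2 with h2 | h2
        · -- z1 = z2
          apply hz12
          have := hmeet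
          rw [h1, h2] at this
          exact this.symm
        · -- r1 = 0, r2 = 1
          have h2' : r2 = 1 := by omega
          have hnx : B1.next z2 = z1 := by
            have := hmeet
            rw [h1, h2'] at this
            simpa using this
          apply hfnB1'
          refine mem_wEdges.2 ⟨z2, hYW 0 (by omega), ?_⟩
          rw [hnx]; exact hfz2'
      · -- r1 = 1, r2 = 0
        have h1' : r1 = 1 := by omega
        have h2 : r2 = 0 := by omega
        have hnx : B1.next z1 = z2 := by
          have := hmeet
          rw [h1', h2] at this
          simpa using this.symm
        apply hfnB1'
        refine mem_wEdges.2 ⟨z1, hXW 0 (by omega), ?_⟩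
        rw [hnx]; exact hfz2
    have hinj : ∀ a b, a ≤ r1 + r2 → b ≤ r1 + r2 → u a = u b → a = b := by
      intro a b haL hbL heq
      rcases le_or_gt a r1 with ha | ha <;> rcases le_or_gt b r1 with hb | hb
      · rw [huval1 a ha, huval1 b hb] at heq
        exact orbit_inj B1 (by omega) (by omega) heq
      · rw [huval1 a ha, huval2 b hb] at heq
        exact absurd heq (hcross a ha _ (by omega))
      · rw [huval2 a ha, huval1 b hb] at heq
        exact absurd heq.symm (hcross b hb _ (by omega))
      · rw [huval2 a ha, huval2 b hb] at heq
        have := orbit_inj B1 (a := r2 - (a - r1)) (b := r2 - (b - r1))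
          (by omega) (by omega) heq
        omega
    have hedges : ∀ j, j < r1 + r2 → s(u j, u (j+1)) ∈ wEdges A1 := by
      intro j hj
      rcases lt_or_ge j r1 with hjr | hjr
      · rw [huval1 j (by omega), huval1 (j+1) (by omega)]
        exact harrX j hjr
      · rcases eq_or_lt_of_le hjr with heq' | hjr'
        · have hj1 : u j = B1.next^[r2] z2 := by
            rw [huval1 j (by omega), ← heq', ← hmeet]
          have hj2 : u (j+1) = B1.next^[r2 - 1] z2 := by
            rw [huval2 (j+1) (by omega), show r2 - (j + 1 - r1) = r2 - 1 from by omega]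
          rw [hj1, hj2, Sym2.eq_swap]
          have := harrY (r2 - 1) (by omega)
          rwa [show r2 - 1 + 1 = r2 by omega] at this
        · rw [huval2 j (by omega), huval2 (j+1) (by omega)]
          rw [Sym2.eq_swap]
          have := harrY (r2 - (j + 1 - r1)) (by omega)
          rwa [show r2 - (j + 1 - r1) + 1 = r2 - (j - r1) by omega] at this
    have hclose : s(u 0, u (r1 + r2)) ∈ wEdges A1 := by
      rw [hu0, huL, hfz2]; exact hfA1
    exact path_edge_cycle A1 hL2 u hinj hedges hclose
  · -- different components in B1 : merge argument
    have hsink21 : wgS B1 z2 ≠ wgS B1 z1 := fun h => hbb h.symm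
    have hm1 := use_merge Ve Vp B1 ck (fun W0 g0 h0 => hoptk W0 g0 (by omega))
      hadj hsink21 (hfz2 ▸ hfnB1')
    have hm2 := use_merge Ve Vp B1 ck (fun W0 g0 h0 => hoptk W0 g0 (by omega))
      hadj.symm hbb (hfz2' ▸ hfnB1')
    rw [hcB1] at hm1 hm2
    rw [hfz2] at hm1
    rw [hfz2'] at hm2
    -- strict versions
    have hb1lt : Vp (wgS B1 z1) + (ck - c1) < Ve f := by
      rcases lt_or_eq_of_le (by linarith : Vp (wgS B1 z1) + (ck - c1) ≤ Ve f) with h | h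
      · exact h
      · exfalso
        have hdiff : Ve f - Vp (wgS B1 z1) = Ve f1 - Vp s := by rw [← hD]; linarith
        exact hff1 (hVe3 f hfG f1 hf1G _ s hdiff).1
    have hb2lt : Vp (wgS B1 z2) + (ck - c1) < Ve f := by
      rcases lt_or_eq_of_le (by linarith : Vp (wgS B1 z2) + (ck - c1) ≤ Ve f) with h | h
      · exact h
      · exfalso
        have hdiff : Ve f - Vp (wgS B1 z2) = Ve f1 - Vp s := by rw [← hD]; linarith
        exact hff1 (hVe3 f hfG f1 hf1G _ s hdiff).1
    -- both sinks are sinks of A1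
    have hsinkA1 : ∀ z : V, wgS B1 z ∈ WB1 → Vp (wgS B1 z) + (ck - c1) < Ve f →
        wgS B1 z ∈ WA1 := by
      intro z hmem hlt
      have hmem' : wgS B1 z ∈ insert s WB := by rw [← hWB1]; exact hmem
      rcases Finset.mem_insert.1 hmem' with h | h
      · rw [hWA1, Finset.mem_insert]; exact Or.inl h
      · have : wgS B1 z ∈ WA := by
          by_contra hnA
          exact absurd (hminV _ (Finset.mem_union_right _ (Finset.mem_sdiff.2 ⟨h, hnA⟩)))
            (not_le.2 hlt)
        rw [hWA1]; exact Finset.mem_insert_of_mem this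
    have hb1A1 := hsinkA1 z1 (wgS_mem B1 z1) hb1lt
    have hb2A1 := hsinkA1 z2 (wgS_mem B1 z2) hb2lt
    -- full orbits are in A1
    have harr : ∀ (z : V), G.Adj z1 z2 → (s(z1, z2) = f) →
        True := fun _ _ _ => trivial
    have harr1 : ∀ j, j < wgH B1 z1 → s(B1.next^[j] z1, B1.next^[j+1] z1) ∈ wEdges A1 := by
      intro j hj
      have hiW := wgH_pre B1 z1 hj
      have hvi : wgReach B1 z1 (B1.next^[j] z1) := ⟨j, rfl⟩
      have hsw := use_swap Ve Vp B1 c1 (fun W0 g0 h0 => hopt1 W0 g0 (by omega))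
        hvi hiW hadj (avoid_of_sink_ne B1 hvi hsink21) (hfz2 ▸ hfnB1')
      rw [hcB1] at hsw
      have hedge : s(B1.next^[j] z1, B1.next (B1.next^[j] z1)) ∈ wEdges B1 :=
        mem_wEdges.2 ⟨_, hiW, rfl⟩
      have hlt := hstrict _ hedge (by rw [← hfz2]; linarith)
      have := htrans _ hedge hlt
      rwa [Function.iterate_succ_apply' B1.next j z1]
    have harr2 : ∀ j, j < wgH B1 z2 → s(B1.next^[j] z2, B1.next^[j+1] z2) ∈ wEdges A1 := by
      intro j hj
      have hiW := wgH_pre B1 z2 hj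
      have hvi : wgReach B1 z2 (B1.next^[j] z2) := ⟨j, rfl⟩
      have hsw := use_swap Ve Vp B1 c1 (fun W0 g0 h0 => hopt1 W0 g0 (by omega))
        hvi hiW hadj.symm (avoid_of_sink_ne B1 hvi hbb) (hfz2' ▸ hfnB1')
      rw [hcB1] at hsw
      have hedge : s(B1.next^[j] z2, B1.next (B1.next^[j] z2)) ∈ wEdges B1 :=
        mem_wEdges.2 ⟨_, hiW, rfl⟩
      have hlt := hstrict _ hedge (by rw [← hfz2']; linarith)
      have := htrans _ hedge hlt
      rwa [Function.iterate_succ_apply' B1.next j z2]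
    have hchain1 := chain_sink B1 A1 z1 harr1
    have hchain2 := chain_sink B1 A1 z2 harr2
    rw [wgS_fixed A1 hb1A1] at hchain1
    rw [wgS_fixed A1 hb2A1] at hchain2
    have hsame := edge_same_sink A1 (show s(z1, z2) ∈ wEdges A1 from hfz2 ▸ hfA1)
    rw [hchain1, hchain2] at hsame
    exact hbb hsame

lemma core_eq
    (hgen : Generic' G Ve Vp)
    (hoptk : ∀ (W0 : Finset V) (g0 : WGraph G W0), W0.card = k → ck ≤ wcost Ve Vp g0)
    (hopt1 : ∀ (W0 : Finset V) (g0 : WGraph G W0), W0.card = k + 1 → c1 ≤ wcost Ve Vp g0)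
    (hf1G : f1 ∈ G.edgeSet) (hD : ck - c1 = Ve f1 - Vp s)
    (Ak : WGraph G WA) (Bk : WGraph G WB) (A1 : WGraph G WA1) (B1 : WGraph G WB1)
    (hcA : wcost Ve Vp Ak = ck) (hcB : wcost Ve Vp Bk = ck)
    (hcA1 : wcost Ve Vp A1 = c1) (hcB1 : wcost Ve Vp B1 = c1)
    (hkA : WA.card = k) (hkB : WB.card = k)
    (hkA1 : WA1.card = k + 1) (hkB1 : WB1.card = k + 1)
    (hEA : wEdges Ak = wEdges A1 ∪ {f1}) (hEB : wEdges Bk = wEdges B1 ∪ {f1})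
    (hfnA1 : f1 ∉ wEdges A1) (hfnB1 : f1 ∉ wEdges B1)
    (hWA1 : WA1 = insert s WA) (hWB1 : WB1 = insert s WB)
    (hsA : s ∉ WA) (hsB : s ∉ WB) :
    wEdges Ak = wEdges Bk := by
  by_contra hne
  have hSE : ((wEdges Ak \ wEdges Bk) ∪ (wEdges Bk \ wEdges Ak)).Nonempty := by
    rw [Finset.nonempty_iff_ne_empty]
    intro hempty
    rw [Finset.union_eq_empty, Finset.sdiff_eq_empty_iff_subset,
      Finset.sdiff_eq_empty_iff_subset] at hempty
    exact hne (Finset.Subset.antisymm hempty.1 hempty.2)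
  obtain ⟨f0, hf0, hf0min⟩ := Finset.exists_min_image _ Ve hSE
  -- dispatcher for the edge case
  have hedgecase : (∀ u ∈ (WA \ WB) ∪ (WB \ WA), Ve f0 ≤ Vp u + (ck - c1)) → False := by
    intro hminV
    rcases Finset.mem_union.1 hf0 with hmem | hmem
    · obtain ⟨hfA, hfB⟩ := Finset.mem_sdiff.1 hmem
      exact subE hgen hoptk hopt1 hf1G hD Ak Bk A1 B1 hcB1 hkB1 hEA hEB hfnB1 hWA1 hWB1
        hfA hfB hf0min hminV
    · obtain ⟨hfB, hfA⟩ := Finset.mem_sdiff.1 hmem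
      exact subE hgen hoptk hopt1 hf1G hD Bk Ak B1 A1 hcA1 hkA1 hEB hEA hfnA1 hWB1 hWA1
        hfB hfA (fun h hh => hf0min h (by rwa [Finset.union_comm] at hh))
        (fun u hu => hminV u (by rwa [Finset.union_comm] at hu))
  -- dispatcher for the sink case
  have hsinkcase : ∀ v0 ∈ (WA \ WB) ∪ (WB \ WA),
      (∀ h ∈ (wEdges Ak \ wEdges Bk) ∪ (wEdges Bk \ wEdges Ak), Vp v0 + (ck - c1) ≤ Ve h) →
      (∀ u ∈ (WA \ WB) ∪ (WB \ WA), Vp v0 ≤ Vp u) → False := by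
    intro v0 hv0 hminE hminV
    rcases Finset.mem_union.1 hv0 with hmem | hmem
    · obtain ⟨hvA, hvB⟩ := Finset.mem_sdiff.1 hmem
      exact subA hgen hoptk hopt1 hf1G hD Ak Bk hcB hkB hvA hvB
        (fun h => hsA (h ▸ hvA)) hminE hminV
    · obtain ⟨hvB, hvA⟩ := Finset.mem_sdiff.1 hmem
      exact subA hgen hoptk hopt1 hf1G hD Bk Ak hcA hkA hvB hvA
        (fun h => hsB (h ▸ hvB))
        (fun h hh => hminE h (by rwa [Finset.union_comm] at hh))
        (fun u hu => hminV u (by rwa [Finset.union_comm] at hu))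
  by_cases hSV : ((WA \ WB) ∪ (WB \ WA)).Nonempty
  · obtain ⟨v0, hv0, hv0min⟩ := Finset.exists_min_image _ Vp hSV
    rcases le_or_gt (Ve f0) (Vp v0 + (ck - c1)) with hle | hlt
    · exact hedgecase (fun u hu => le_trans hle (by linarith [hv0min u hu]))
    · exact hsinkcase v0 hv0
        (fun h hh => le_trans (le_of_lt hlt) (hf0min h hh))
        hv0min
  · rw [Finset.not_nonempty_iff_eq_empty] at hSV
    exact hedgecase (fun u hu => absurd (hSV ▸ hu) (Finset.notMem_empty u))

end Core

theorem removed_edge_min_in_cut' {V : Type*} [Fintype V] [DecidableEq V]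
    (G : SimpleGraph V) (Ve : Sym2 V → ℝ) (Vp : V → ℝ)
    (hgen : Generic' G Ve Vp) (k : ℕ)
    (W : Finset V) (g : WGraph G W) (hkW : W.card = k)
    (hoptk : ∀ (W0 : Finset V) (g0 : WGraph G W0), W0.card = k → wcost Ve Vp g ≤ wcost Ve Vp g0)
    (W' : Finset V) (g' : WGraph G W') (hkW' : W'.card = k + 1)
    (hopt1 : ∀ (W0 : Finset V) (g0 : WGraph G W0), W0.card = k + 1 →
      wcost Ve Vp g' ≤ wcost Ve Vp g0)
    (s : V) (hs : s ∈ W') (hsW : s ∉ W)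
    (e : Sym2 V) (he : e ∈ wEdges g) (he' : e ∉ wEdges g') :
    IsLeast {x : ℝ | ∃ p q : V, G.Adj p q ∧ (∃ n : ℕ, g'.next^[n] p = s) ∧
        ¬ (∃ n : ℕ, g'.next^[n] q = s) ∧ x = Ve s(p, q)} (Ve e) := by
  classical
  obtain ⟨hVp, hVe2, hVe3⟩ := hgen
  set ck := wcost Ve Vp g with hckdef
  set c1 := wcost Ve Vp g' with hc1def
  -- Step 1 : the sink of s in g is not in the component t of g'
  have hnr : ¬ wgReach g' (wgS g s) s := by
    intro hr
    have hws : wgS g s ≠ s := fun h => hsW (h ▸ wgS_mem g s)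
    have hwW' : wgS g s ∉ W' := by
      intro hmem
      obtain ⟨n, hn⟩ := hr
      rw [iter_fixed g' hmem n] at hn
      exact hws hn
    have h1 := use_resink Ve Vp g' c1 (fun W0 g0 h0 => hopt1 W0 g0 (by omega)) hwW'
    have hsinkw : wgS g' (wgS g s) = s := (wgReach_sink_eq g' hr hs).symm
    rw [hsinkw] at h1
    have h2 := use_resink Ve Vp g ck (fun W0 g0 h0 => hoptk W0 g0 (by omega)) hsW
    -- ck ≤ ck + Vp s - Vp (wgS g s)
    have hlt : Vp s < Vp (wgS g s) :=
      lt_of_le_of_ne (by linarith) (fun h => hws (hVp h).symm)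
    linarith
  -- Step 2 : find the exit edge f1 = s(y J, y (J+1)) on the g-orbit of s
  have hexit : ∃ j, ¬ wgReach g' (g.next^[j] s) s := ⟨wgH g s, hnr⟩
  have hN1 : 1 ≤ Nat.find hexit := by
    rcases Nat.eq_zero_or_pos (Nat.find hexit) with h0 | h0
    · exfalso
      have := Nat.find_spec hexit
      rw [h0] at this
      exact this ⟨0, rfl⟩
    · omega
  obtain ⟨J, hJdef⟩ : ∃ J, J + 1 = Nat.find hexit := ⟨Nat.find hexit - 1, by omega⟩
  have hJt : wgReach g' (g.next^[J] s) s := by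
    by_contra hJt
    have hle : Nat.find hexit ≤ J := Nat.find_le hJt
    omega
  have hJ1 : ¬ wgReach g' (g.next^[J+1] s) s := hJdef ▸ Nat.find_spec hexit
  have hyJW : g.next^[J] s ∉ W := by
    intro hmem
    have : g.next^[J] s = wgS g s := wgReach_sink_eq g ⟨J, rfl⟩ hmem
    rw [this] at hJt
    exact hnr hJt
  have hyJ1 : g.next (g.next^[J] s) = g.next^[J+1] s :=
    (Function.iterate_succ_apply' g.next J s).symm
  set f1 : Sym2 V := s(g.next^[J] s, g.next (g.next^[J] s)) with hf1def
  have hf1g : f1 ∈ wEdges g := mem_wEdges.2 ⟨_, hyJW, rfl⟩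
  have hf1G : f1 ∈ G.edgeSet := wEdges_subset g hf1g
  have hadj1 : G.Adj (g.next^[J] s) (g.next^[J+1] s) := by
    rw [← hyJ1]; exact g.adj_of_not_sink _ hyJW
  have hsJ : wgS g' (g.next^[J] s) = s := (wgReach_sink_eq g' hJt hs).symm
  have hsink1 : wgS g' (g.next^[J+1] s) ≠ wgS g' (g.next^[J] s) := by
    rw [hsJ]
    intro hss
    exact hJ1 ⟨wgH g' (g.next^[J+1] s), hss⟩
  have hnew1 : s(g.next^[J] s, g.next^[J+1] s) ∉ wEdges g' := by
    intro hmem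
    exact hsink1 (edge_same_sink g' hmem).symm
  have hf1form : s(g.next^[J] s, g.next^[J+1] s) = f1 := by rw [hf1def, hyJ1]
  -- Step 3 : merge and split inequalities give D = Ve f1 - Vp s
  have hmerge1 : ck ≤ c1 + Ve f1 - Vp s := by
    have := use_merge Ve Vp g' ck (fun W0 g0 h0 => hoptk W0 g0 (by omega))
      hadj1 hsink1 hnew1
    rw [hsJ, hf1form] at this
    linarith
  have hsplit1 : c1 ≤ ck - Ve f1 + Vp s := by
    have := use_split Ve Vp g c1 (fun W0 g0 h0 => hopt1 W0 g0 (by omega))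
      (⟨J, rfl⟩ : wgReach g s (g.next^[J] s)) hyJW hsW
    rw [← hf1def] at this
    linarith
  have hD : ck - c1 = Ve f1 - Vp s := by linarith
  -- Step 4 : build the merged graph g'' and the split graph g3
  have hq'' : g.next^[J+1] s = g.next^[J] s ∨ (G.Adj (g.next^[J] s) (g.next^[J+1] s) ∧
      ∀ n, g'.next^[n] (g.next^[J+1] s) ∉ pathP g' (g.next^[J] s) s hJt) :=
    Or.inr ⟨hadj1, avoid_of_sink_ne g' hJt hsink1⟩
  have hq1ne : ¬ (g.next^[J+1] s = g.next^[J] s) := fun h => hadj1.ne h.symm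
  have hnewf : g.next^[J+1] s ≠ g.next^[J] s → s(g.next^[J] s, g.next^[J+1] s) ∉ wEdges g' :=
    fun _ => hnew1
  -- the merged k-sink graph
  have hWMeq : WM W' (g.next^[J] s) s (g.next^[J+1] s) = W'.erase s := by
    rw [WM, if_neg hq1ne]
  have hcB : wcost Ve Vp (wgMod g' (g.next^[J] s) s (g.next^[J+1] s) hJt hq'') = ck := by
    rw [wcost_wgMod g' _ s _ hJt hq'' Ve Vp hnewf, if_pos hs, if_neg hq1ne, if_neg hq1ne,
      if_pos hs, ← hc1def, hf1form]
    linarith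
  have hkB : (WM W' (g.next^[J] s) s (g.next^[J+1] s)).card = k := by
    rw [hWMeq, Finset.card_erase_of_mem hs, hkW']
    omega
  have hEB : wEdges (wgMod g' (g.next^[J] s) s (g.next^[J+1] s) hJt hq'') =
      wEdges g' ∪ {f1} := by
    rw [wEdges_wgMod g' _ s _ hJt hq'' hnewf, if_pos hs, if_neg hq1ne, hf1form]
  -- the split (k+1)-sink graph
  have hvi3 : wgReach g s (g.next^[J] s) := ⟨J, rfl⟩
  have hnewf3 : s ≠ s → s(s, s) ∉ wEdges g := fun h => absurd rfl h
  have hWAeq : WM W s (g.next^[J] s) s = insert s W := by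
    rw [WM, if_pos rfl, Finset.erase_eq_of_notMem hyJW]
  have hcA1 : wcost Ve Vp (wgMod g s (g.next^[J] s) s hvi3 (Or.inl rfl)) = c1 := by
    rw [wcost_wgMod g s _ s hvi3 (Or.inl rfl) Ve Vp hnewf3, if_neg hyJW, if_pos rfl,
      if_pos rfl, if_neg hyJW, ← hckdef, ← hf1def]
    linarith
  have hkA1 : (WM W s (g.next^[J] s) s).card = k + 1 := by
    rw [hWAeq, Finset.card_insert_of_notMem hsW, hkW]
  have hEA1 : wEdges (wgMod g s (g.next^[J] s) s hvi3 (Or.inl rfl)) =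
      (wEdges g).erase f1 := by
    rw [wEdges_wgMod g s _ s hvi3 (Or.inl rfl) hnewf3, if_neg hyJW, if_pos rfl,
      Finset.union_empty, ← hf1def]
  have hEA : wEdges g = wEdges (wgMod g s (g.next^[J] s) s hvi3 (Or.inl rfl)) ∪ {f1} := by
    rw [hEA1, Finset.union_comm, ← Finset.insert_eq, Finset.insert_erase hf1g]
  have hnew1' : f1 ∉ wEdges g' := by rw [← hf1form]; exact hnew1
  -- Step 5 : apply the core uniqueness result
  have hmain : wEdges g = wEdges (wgMod g' (g.next^[J] s) s (g.next^[J+1] s) hJt hq'') := by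
    refine core_eq ⟨hVp, hVe2, hVe3⟩ hoptk hopt1 hf1G hD g
      (wgMod g' (g.next^[J] s) s (g.next^[J+1] s) hJt hq'')
      (wgMod g s (g.next^[J] s) s hvi3 (Or.inl rfl)) g'
      rfl hcB hcA1 rfl hkW hkB hkA1 hkW' hEA hEB ?_ hnew1' ?_ ?_ hsW ?_
    case _ => rw [hEA1]; exact Finset.notMem_erase f1 _
    case _ => exact hWAeq
    case _ => rw [hWMeq, Finset.insert_erase hs]
    case _ => rw [hWMeq]; exact Finset.notMem_erase s _
  -- Step 6 : identify e with f1
  have hef1 : e = f1 := by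
    rw [hmain, hEB] at he
    rcases Finset.mem_union.1 he with h | h
    · exact absurd h he'
    · exact Finset.mem_singleton.1 h
  -- Step 7 : conclusion
  constructor
  · exact ⟨g.next^[J] s, g.next^[J+1] s, hadj1, hJt, hJ1, by rw [hef1, hf1form]⟩
  · rintro x ⟨p, q, hpq, hp, hq, rfl⟩
    have hsp : wgS g' p = s := (wgReach_sink_eq g' hp hs).symm
    have hsq : wgS g' q ≠ wgS g' p := by
      rw [hsp]
      intro hss
      exact hq ⟨wgH g' q, hss⟩
    have hnewpq : s(p, q) ∉ wEdges g' := by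
      intro hmem
      exact hsq (edge_same_sink g' hmem).symm
    have := use_merge Ve Vp g' ck (fun W0 g0 h0 => hoptk W0 g0 (by omega)) hpq hsq hnewpq
    rw [hsp] at this
    rw [hef1]
    linarith


/-- under the genericness assumption, the edge `e` removed when passing from
the optimal forest with `k` sinks to the optimal forest with `k+1` sinks has the smallest
potential among all edges of `G` in the cut-set separating the component `t` of the new
forest containing the new sink `s` from the rest of the network. -/
theorem removed_edge_min_in_cut {V : Type*} [Fintype V] [DecidableEq V]
    (G : SimpleGraph V) (hG : G.Connected) (Ve : Sym2 V → ℝ) (Vp : V → ℝ)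
    (hgen : Generic G Ve Vp) (k : ℕ) (hk : 1 ≤ k)
    (W : Finset V) (g : WGraph G W) (hopt : IsOptimalWGraph G Ve Vp k W g)
    (W' : Finset V) (g' : WGraph G W') (hopt' : IsOptimalWGraph G Ve Vp (k + 1) W' g')
    (s : V) (hs : s ∈ W') (hsW : s ∉ W)
    (e : Sym2 V) (he : e ∈ wEdges g) (he' : e ∉ wEdges g') :
    IsLeast {x : ℝ | ∃ p q : V, G.Adj p q ∧ (∃ n : ℕ, g'.next^[n] p = s) ∧
        ¬ (∃ n : ℕ, g'.next^[n] q = s) ∧ x = Ve s(p, q)} (Ve e) := by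
  obtain ⟨hkW, hoptk⟩ := hopt
  obtain ⟨hkW', hopt1⟩ := hopt'
  exact removed_edge_min_in_cut' G Ve Vp hgen k W g hkW hoptk W' g' hkW' hopt1 s hs hsW e he he'
end

section
/- Under the genericness assumption, the largest Freidlin's cycle C_k containing the sink s*_k and not containing any state of smaller potential equals { s ∈ t_k : max of V_{ij} over edges of the unique tree path from s*_k to s is less than V_{p*_{k−1} q*_{k−1}} }, and in particular C_k is contained in the component t_k of the optimal forest T*_k containing s*_k. -/
open Finset

/-- A Freidlin's cycle containing the state `s`, relative to the minimum spanning tree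
`T`: a set of the form `{x | max_{(i,j) ∈ w*(s,x)} V_{ij} < a}` for some constant `a`,
where `w*(s,x)` is the unique path in `T` joining `s` and `x`. -/
def IsFreidlinCycle {V : Type*} (T : SimpleGraph V) (Ve : Sym2 V → ℝ) (s : V)
    (C : Set V) : Prop :=
  ∃ a : ℝ, C = {x : V | ∀ p : T.Walk s x, p.IsPath →
    (p.edges.map Ve).maximum < (a : WithBot ℝ)}

/-!
Every comparison of optimal `W`-graphs below is one surgery: reverse the arrows along an orbit
segment `x → ⋯ → g.next^[n] x` and re-aim `x`. The cost changes by a telescoping sum, which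
yields four exchange inequalities: a sink has the least potential of its basin; splitting off a
new sink; merging two basins; trading an arrow for an edge leaving its basin. The last one,
with the cycle property of minimum spanning trees, puts optimal forests inside `T`.

Put `θ = cost g - cost g' + V_s`. Splitting and merging at the arrow where the `g`-orbit of `s`
leaves its new basin give that arrow the weight `θ`; the same two inequalities at the removed
edge `e`, with genericness, give `V_e = θ`. Merging also shows that edges leaving the new basin
of `s` weigh at least `θ`, so the Freidlin cycle of level `θ` lies in that basin, where `s` has
the least potential; and the tree path from `s` to its old sink, of lower potential, has
weights at most `θ`, so no higher level is admissible.
-/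

open SimpleGraph

theorem Nat.exists_lt_and_not_succ (P : ℕ → Prop) {N : ℕ} (h₀ : P 0) (hN : ¬ P N) :
    ∃ i < N, P i ∧ ¬ P (i + 1) := by
  induction N with
  | zero => exact absurd h₀ hN
  | succ N ih =>
    by_cases hP : P N
    · exact ⟨N, N.lt_succ_self, hP, hN⟩
    · obtain ⟨i, hi, h⟩ := ih hP
      exact ⟨i, hi.trans N.lt_succ_self, h⟩

theorem List.maximum_lt_coe_iff {α : Type*} [LinearOrder α] {l : List α} {a : α} :
    l.maximum < (a : WithBot α) ↔ ∀ b ∈ l, b < a := by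
  simp [← not_le, List.coe_le_maximum_iff]

namespace SimpleGraph

variable {V : Type*} {T : SimpleGraph V}

theorem IsAcyclic.mem_edges_of_adj (hT : T.IsAcyclic) {u v : V} (huv : T.Adj u v)
    (q : T.Walk u v) : s(u, v) ∈ q.edges :=
  isBridge_iff_forall_walk_mem_edges.mp (isAcyclic_iff_forall_adj_isBridge.mp hT huv) q

theorem IsAcyclic.mem_edges_of_isPath (hT : T.IsAcyclic) {u v : V} {p : T.Walk u v}
    (hp : p.IsPath) (q : T.Walk u v) {f : Sym2 V} (hf : f ∈ p.edges) : f ∈ q.edges := by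
  classical
  have hpq : q.bypass = p :=
    congrArg Subtype.val ((hT.subsingleton_path u v).elim ⟨q.bypass, q.bypass_isPath⟩ ⟨p, hp⟩)
  exact q.edges_bypass_subset_edges (hpq ▸ hf)

theorem Reachable.of_forall_adj {H : SimpleGraph V} (h : ∀ u v, T.Adj u v → H.Reachable u v)
    {u v : V} (huv : T.Reachable u v) : H.Reachable u v := by
  obtain ⟨q⟩ := huv
  induction q with
  | nil => rfl
  | cons hadj _ ih => exact (h _ _ hadj).trans ih

theorem IsTree.deleteEdges_sup_edge (hT : T.IsTree) {a b : V} (hab : a ≠ b) (habT : ¬ T.Adj a b)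
    {p : T.Walk a b} (hp : p.IsPath) {f : Sym2 V} (hf : f ∈ p.edges) :
    (T.deleteEdges {f} ⊔ edge a b).IsTree := by
  induction f using Sym2.ind with | h z y => ?_
  have hnr : ¬ (T.deleteEdges {s(z, y)}).Reachable a b := by
    rw [reachable_deleteEdges_iff_exists_walk]
    exact fun ⟨q, hq⟩ => hq (hT.isAcyclic.mem_edges_of_isPath hp q hf)
  -- `p` closed up by the new edge is a cycle through `f`, so deleting `f` keeps `z`, `y` connected
  have hzy : (T.deleteEdges {s(z, y)} ⊔ edge a b).Reachable z y := by
    have hba : (T ⊔ edge a b).Adj b a :=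
      Or.inr ((edge_adj a b b a).mpr ⟨Or.inr ⟨rfl, rfl⟩, hab.symm⟩)
    have hc : (Walk.cons hba (p.mapLe le_sup_left)).IsCycle := by
      rw [Walk.cons_isCycle_iff, Walk.edges_mapLe_eq_edges]
      exact ⟨hp.mapLe _, fun h => habT (p.adj_of_mem_edges h).symm⟩
    obtain ⟨-, hr⟩ := adj_and_reachable_delete_edges_iff_exists_cycle.mpr
      ⟨b, _, hc, by
        rw [Walk.edges_cons, Walk.edges_mapLe_eq_edges]; exact List.mem_cons_of_mem _ hf⟩
    refine hr.mono ?_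
    simp only [deleteEdges, sup_sdiff]
    exact sup_le_sup_left sdiff_le _
  have hadj : ∀ u v, T.Adj u v → (T.deleteEdges {s(z, y)} ⊔ edge a b).Reachable u v := by
    intro u v huv
    by_cases h : s(u, v) = s(z, y)
    · rcases Sym2.eq_iff.mp h with ⟨rfl, rfl⟩ | ⟨rfl, rfl⟩
      exacts [hzy, hzy.symm]
    · exact Adj.reachable (Or.inl ((deleteEdges_adj ..).mpr ⟨huv, h⟩))
  have : Nonempty V := ⟨a⟩
  refine ⟨⟨fun u v => (hT.connected.preconnected u v).of_forall_adj hadj⟩, ?_⟩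
  exact (hT.isAcyclic.anti (deleteEdges_le _)).sup_edge_of_not_reachable hnr

end SimpleGraph

theorem IsMST.lt_of_mem_edges {V : Type*} [Finite V] {G T : SimpleGraph V} {c : Sym2 V → ℝ}
    (hc : Set.InjOn c G.edgeSet) (hT : IsMST G c T) {a b : V}
    (hab : G.Adj a b) (habT : ¬ T.Adj a b) {p : T.Walk a b} (hp : p.IsPath) {f : Sym2 V}
    (hf : f ∈ p.edges) : c f < c s(a, b) := by
  have hfT : f ∈ T.edgeSet := p.edges_subset_edgeSet hf
  have hTsum : ∑ᶠ e ∈ T.edgeSet, c e = c f + ∑ᶠ e ∈ T.edgeSet \ {f}, c e := by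
    rw [← finsum_mem_insert c (fun h => h.2 rfl) (Set.toFinite _), Set.insert_sdiff_singleton,
      Set.insert_eq_of_mem hfT]
  have hsum := hT.2.2 _ (hT.1.deleteEdges_sup_edge hab.ne habT hp hf)
    (sup_le ((deleteEdges_le _).trans hT.2.1) ((edge_le_iff G).mpr (Or.inr hab)))
  rw [edgeSet_sup, edgeSet_deleteEdges, edgeSet_edge_of_ne hab.ne, Set.union_singleton,
    finsum_mem_insert c (fun h => habT h.1) (Set.toFinite _), hTsum] at hsum
  exact (add_le_add_iff_right _).mp hsum |>.lt_of_ne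
    fun h => habT <| (mem_edgeSet T).mp (hc (edgeSet_mono hT.2.1 hfT) hab h ▸ hfT)

namespace WGraph

variable {V : Type*} {G : SimpleGraph V} {W : Finset V}

section Orbit

variable (g : WGraph G W)

theorem iterate_next_of_mem {x : V} (hx : x ∈ W) (m : ℕ) : g.next^[m] x = x :=
  Function.iterate_fixed (g.sink_fixed x hx) m

theorem iterate_next_eq_of_le {x : V} {m l : ℕ} (hm : g.next^[m] x ∈ W) (hl : m ≤ l) :
    g.next^[l] x = g.next^[m] x := by
  obtain ⟨d, rfl⟩ := Nat.exists_eq_add_of_le hl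
  rw [add_comm, Function.iterate_add_apply, g.iterate_next_of_mem hm]

theorem mem_of_isPeriodicPt {x : V} {p : ℕ} (hp : 0 < p)
    (hx : Function.IsPeriodicPt g.next p x) : x ∈ W := by
  obtain ⟨N, hN⟩ := g.absorbed x
  rw [← (hx.mul_const N).eq, g.iterate_next_eq_of_le hN (Nat.le_mul_of_pos_left N hp)]
  exact hN

theorem eq_of_iterate_next_eq {x : V} {n j j' : ℕ} (hx : ∀ i < n, g.next^[i] x ∉ W)
    (hj : j ≤ n) (hj' : j' ≤ n) (h : g.next^[j] x = g.next^[j'] x) : j = j' := by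
  wlog hlt : j < j' generalizing j j'
  · rcases (not_lt.mp hlt).lt_or_eq with h' | h'
    · exact (this hj' hj h.symm h').symm
    · exact h'.symm
  refine absurd (g.mem_of_isPeriodicPt (Nat.sub_pos_of_lt hlt) ?_) (hx j (hlt.trans_le hj'))
  change g.next^[j' - j] (g.next^[j] x) = g.next^[j] x
  rw [← Function.iterate_add_apply, Nat.sub_add_cancel hlt.le, h]

open Classical in
noncomputable def sinkTime (x : V) : ℕ := Nat.find (g.absorbed x)

noncomputable def sink (x : V) : V := g.next^[g.sinkTime x] x

theorem iterate_sinkTime (x : V) : g.next^[g.sinkTime x] x = g.sink x := rfl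

theorem sink_mem (x : V) : g.sink x ∈ W := by
  classical exact Nat.find_spec (g.absorbed x)

theorem iterate_notMem_of_lt_sinkTime {x : V} {m : ℕ} (h : m < g.sinkTime x) :
    g.next^[m] x ∉ W := by
  classical exact Nat.find_min (g.absorbed x) h

theorem iterate_eq_sink {x : V} {m : ℕ} (h : g.next^[m] x ∈ W) : g.next^[m] x = g.sink x := by
  classical exact g.iterate_next_eq_of_le (g.sink_mem x) (Nat.find_min' _ h)

theorem sink_of_mem {x : V} (hx : x ∈ W) : g.sink x = x :=
  (g.iterate_eq_sink (m := 0) hx).symm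

theorem sink_iterate (x : V) (a : ℕ) : g.sink (g.next^[a] x) = g.sink x := by
  have h := g.iterate_eq_sink (x := x) (m := g.sinkTime (g.next^[a] x) + a)
    (by rw [Function.iterate_add_apply]; exact g.sink_mem _)
  rwa [Function.iterate_add_apply] at h

def Reaches (x v : V) : Prop := ∃ n : ℕ, g.next^[n] x = v

variable {g}

theorem reaches_refl (x : V) : g.Reaches x x := ⟨0, rfl⟩

theorem reaches_iterate (x : V) (n : ℕ) : g.Reaches x (g.next^[n] x) := ⟨n, rfl⟩

theorem reaches_sink (x : V) : g.Reaches x (g.sink x) := ⟨_, rfl⟩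

theorem Reaches.trans {x v z : V} (h₁ : g.Reaches x v) (h₂ : g.Reaches v z) :
    g.Reaches x z := by
  obtain ⟨a, rfl⟩ := h₁
  obtain ⟨b, rfl⟩ := h₂
  exact ⟨b + a, Function.iterate_add_apply _ _ _ _⟩

theorem Reaches.sink_eq {x v : V} (h : g.Reaches x v) : g.sink v = g.sink x := by
  obtain ⟨a, rfl⟩ := h
  exact g.sink_iterate x a

theorem Reaches.notMem {x v : V} (h : g.Reaches x v) (hv : v ∉ W) : x ∉ W := by
  obtain ⟨a, rfl⟩ := h
  exact fun hx => hv (by rwa [g.iterate_next_of_mem hx])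

theorem sink_eq_of_reaches {x s : V} (hs : s ∈ W) (h : g.Reaches x s) : g.sink x = s :=
  h.sink_eq.symm.trans (g.sink_of_mem hs)

theorem reaches_of_reaches_iterate {x v : V} {n j : ℕ} (hn : g.next^[n] x = v) (hj : j ≤ n) :
    g.Reaches (g.next^[j] x) v :=
  ⟨n - j, by rw [← Function.iterate_add_apply, Nat.sub_add_cancel hj, hn]⟩

theorem not_reaches_next_self {x : V} (hx : x ∉ W) : ¬ g.Reaches (g.next x) x := by
  rintro ⟨m, hm⟩
  exact hx (g.mem_of_isPeriodicPt m.succ_pos hm)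

end Orbit

section Redirect

open Classical in
/-- Reverse the arrows along the path `x → g.next x → ⋯ → g.next^[n] x`, make `W₁` the set of
sinks, and send `x` to `y` unless it is a sink. -/
noncomputable def redirectNext (g : WGraph G W) (x : V) (n : ℕ) (y : V) (W₁ : Finset V) :
    V → V := fun z =>
  if z ∈ W₁ then z
  else if h : ∃ j < n, g.next^[j + 1] x = z then g.next^[Nat.find h] x
  else if z = x then y else g.next z

theorem redirectNext_of_mem {g : WGraph G W} {x : V} {n : ℕ} {y : V} {W₁ : Finset V} {z : V}
    (hz : z ∈ W₁) : redirectNext g x n y W₁ z = z := if_pos hz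

/-- Conditions under which `redirectNext g x n y W₁` is the arrow map of a `W₁`-graph. -/
structure RedirectHyp (g : WGraph G W) (x : V) (n : ℕ) (y : V) (W₁ : Finset V) : Prop where
  path_notMem : ∀ j < n, g.next^[j] x ∉ W
  path_notMem_new : ∀ j, 0 < j → j ≤ n → g.next^[j] x ∉ W₁
  eq_end_of_mem : ∀ z ∈ W, z ∉ W₁ → z = g.next^[n] x
  eq_start_of_mem_new : ∀ z ∈ W₁, z ∉ W → z = x
  target : x ∉ W₁ → G.Adj x y ∧ ¬ g.Reaches y (g.next^[n] x)

namespace RedirectHyp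

variable {g : WGraph G W} {x : V} {n : ℕ} {y : V} {W₁ : Finset V}

theorem redirectNext_iterate_succ (H : RedirectHyp g x n y W₁) {j : ℕ} (hj : j < n) :
    redirectNext g x n y W₁ (g.next^[j + 1] x) = g.next^[j] x := by
  classical
  have hex : ∃ i < n, g.next^[i + 1] x = g.next^[j + 1] x := ⟨j, hj, rfl⟩
  rw [redirectNext, if_neg (H.path_notMem_new _ j.succ_pos hj), dif_pos hex]
  have hspec := Nat.find_spec hex
  rw [Nat.succ_injective (g.eq_of_iterate_next_eq H.path_notMem hspec.1 hj hspec.2)]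

theorem redirectNext_start (H : RedirectHyp g x n y W₁) (hx : x ∉ W₁) :
    redirectNext g x n y W₁ x = y := by
  have hret : ¬ ∃ j < n, g.next^[j + 1] x = x := fun ⟨j, hj, h⟩ =>
    j.succ_ne_zero (g.eq_of_iterate_next_eq H.path_notMem hj n.zero_le h)
  rw [redirectNext, if_neg hx, dif_neg hret, if_pos rfl]

theorem redirectNext_of_notMem_orbit (H : RedirectHyp g x n y W₁) {z : V} (hz : z ∉ W)
    (hp : ∀ j ≤ n, g.next^[j] x ≠ z) : redirectNext g x n y W₁ z = g.next z := by
  have hz₁ : z ∉ W₁ := fun h => hp 0 n.zero_le (H.eq_start_of_mem_new z h hz).symm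
  rw [redirectNext, if_neg hz₁, dif_neg (fun ⟨j, hj, h⟩ => hp (j + 1) hj h),
    if_neg (fun h => hp 0 n.zero_le h.symm)]

theorem iterate_redirectNext_eq (H : RedirectHyp g x n y W₁) {z : V} {N : ℕ}
    (hN : ∀ i < N, g.next^[i] z ∉ W ∧ ∀ j ≤ n, g.next^[j] x ≠ g.next^[i] z) :
    (redirectNext g x n y W₁)^[N] z = g.next^[N] z := by
  induction N with
  | zero => rfl
  | succ N ih =>
    obtain ⟨hW, hp⟩ := hN N N.lt_succ_self
    rw [Function.iterate_succ_apply', ih (fun i hi => hN i (hi.trans N.lt_succ_self)),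
      Function.iterate_succ_apply', H.redirectNext_of_notMem_orbit hW hp]

theorem exists_iterate_mem_of_avoids (H : RedirectHyp g x n y W₁) {z : V}
    (hz : ∀ m, ∀ j ≤ n, g.next^[j] x ≠ g.next^[m] z) :
    ∃ m, (redirectNext g x n y W₁)^[m] z ∈ W₁ := by
  refine ⟨g.sinkTime z, ?_⟩
  rw [H.iterate_redirectNext_eq fun i hi => ⟨g.iterate_notMem_of_lt_sinkTime hi, hz i⟩]
  by_contra h
  exact hz _ n le_rfl (H.eq_end_of_mem _ (g.sink_mem z) h).symm

theorem exists_iterate_mem_of_orbit (H : RedirectHyp g x n y W₁) {j : ℕ} (hj : j ≤ n) :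
    ∃ m, (redirectNext g x n y W₁)^[m] (g.next^[j] x) ∈ W₁ := by
  have hback : ∀ j ≤ n, (redirectNext g x n y W₁)^[j] (g.next^[j] x) = x := by
    intro j hj
    induction j with
    | zero => rfl
    | succ j ih =>
      rw [Function.iterate_succ_apply, H.redirectNext_iterate_succ hj, ih (j.le_succ.trans hj)]
  by_cases hx : x ∈ W₁
  · exact ⟨j, by rw [hback j hj]; exact hx⟩
  have hy : ∀ m, ∀ i ≤ n, g.next^[i] x ≠ g.next^[m] y := fun m i hi h =>
    (H.target hx).2 <| (reaches_iterate y m).trans <| by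
      rw [← h]; exact reaches_of_reaches_iterate rfl hi
  obtain ⟨m, hm⟩ := H.exists_iterate_mem_of_avoids hy
  refine ⟨m + (j + 1), ?_⟩
  rw [Function.iterate_add_apply, Function.iterate_succ_apply', hback j hj,
    H.redirectNext_start hx]
  exact hm

theorem exists_iterate_mem (H : RedirectHyp g x n y W₁) (z : V) :
    ∃ m, (redirectNext g x n y W₁)^[m] z ∈ W₁ := by
  classical
  by_cases hhit : ∃ M, ∃ j ≤ n, g.next^[j] x = g.next^[M] z
  · obtain ⟨j, hj, hjM⟩ := Nat.find_spec hhit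
    have hbefore : ∀ i < Nat.find hhit,
        g.next^[i] z ∉ W ∧ ∀ j ≤ n, g.next^[j] x ≠ g.next^[i] z := by
      intro i hi
      have hnot := Nat.find_min hhit hi
      push Not at hnot
      exact ⟨fun hW => hnot j hj (hjM.trans (g.iterate_next_eq_of_le hW hi.le)), hnot⟩
    obtain ⟨m, hm⟩ := H.exists_iterate_mem_of_orbit hj
    refine ⟨m + Nat.find hhit, ?_⟩
    rw [Function.iterate_add_apply, H.iterate_redirectNext_eq hbefore, ← hjM]
    exact hm
  · push Not at hhit
    exact H.exists_iterate_mem_of_avoids hhit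

theorem adj_redirectNext (H : RedirectHyp g x n y W₁) {z : V} (hz : z ∉ W₁) :
    G.Adj z (redirectNext g x n y W₁ z) := by
  by_cases hp : ∃ j ≤ n, g.next^[j] x = z
  · obtain ⟨j, hj, rfl⟩ := hp
    cases j with
    | zero => rw [Function.iterate_zero_apply, H.redirectNext_start hz]; exact (H.target hz).1
    | succ j =>
      rw [H.redirectNext_iterate_succ hj, Function.iterate_succ_apply']
      exact (g.adj_of_not_sink _ (H.path_notMem j hj)).symm
  · push Not at hp
    have hzW : z ∉ W := fun h => hp n le_rfl (H.eq_end_of_mem z h hz).symm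
    rw [H.redirectNext_of_notMem_orbit hzW hp]
    exact g.adj_of_not_sink z hzW

noncomputable def redirect (H : RedirectHyp g x n y W₁) : WGraph G W₁ where
  next := redirectNext g x n y W₁
  adj_of_not_sink _ := H.adj_redirectNext
  sink_fixed _ := redirectNext_of_mem
  absorbed := H.exists_iterate_mem

end RedirectHyp

end Redirect

section Cost

variable [DecidableEq V] {Ve : Sym2 V → ℝ} {Vp : V → ℝ}

variable (Ve Vp) in
def arrowCost (g : WGraph G W) (z : V) : ℝ := if z ∈ W then 0 else Ve s(z, g.next z) - Vp z

theorem arrowCost_of_mem {g : WGraph G W} {z : V} (hz : z ∈ W) : g.arrowCost Ve Vp z = 0 :=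
  if_pos hz

theorem arrowCost_of_notMem {g : WGraph G W} {z : V} (hz : z ∉ W) :
    g.arrowCost Ve Vp z = Ve s(z, g.next z) - Vp z := if_neg hz

theorem wcost_eq_sum_arrowCost [Fintype V] (g : WGraph G W) :
    wcost Ve Vp g = ∑ z, g.arrowCost Ve Vp z := by
  simp only [wcost, arrowCost]
  rw [sum_ite, sum_const_zero, zero_add, filter_notMem_eq_sdiff, ← compl_eq_univ_sdiff]

theorem sum_arrowCost_orbit (g : WGraph G W) {x : V} {n : ℕ}
    (hx : ∀ j < n, g.next^[j] x ∉ W) :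
    ∑ j ∈ range (n + 1), g.arrowCost Ve Vp (g.next^[j] x)
      = ∑ j ∈ range n, (Ve s(g.next^[j] x, g.next^[j + 1] x) - Vp (g.next^[j] x))
        + g.arrowCost Ve Vp (g.next^[n] x) := by
  rw [sum_range_succ]
  congr 1
  refine sum_congr rfl fun j hj => ?_
  rw [arrowCost_of_notMem (hx j (mem_range.mp hj)), Function.iterate_succ_apply']

namespace RedirectHyp

variable {g : WGraph G W} {x : V} {n : ℕ} {y : V} {W₁ : Finset V}

theorem sum_arrowCost_orbit (H : RedirectHyp g x n y W₁) :
    ∑ j ∈ range (n + 1), H.redirect.arrowCost Ve Vp (g.next^[j] x)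
      = H.redirect.arrowCost Ve Vp x
        + ∑ j ∈ range n, (Ve s(g.next^[j] x, g.next^[j + 1] x) - Vp (g.next^[j + 1] x)) := by
  rw [sum_range_succ', add_comm]
  congr 1
  refine sum_congr rfl fun j hj => ?_
  have hj := mem_range.mp hj
  rw [arrowCost_of_notMem (H.path_notMem_new _ j.succ_pos hj)]
  change Ve s(_, redirectNext g x n y W₁ _) - _ = _
  rw [H.redirectNext_iterate_succ hj, Sym2.eq_swap]

theorem arrowCost_redirect_of_notMem_orbit (H : RedirectHyp g x n y W₁) {z : V}
    (hp : ∀ j ≤ n, g.next^[j] x ≠ z) : H.redirect.arrowCost Ve Vp z = g.arrowCost Ve Vp z := by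
  by_cases hzW : z ∈ W
  · have hz₁ : z ∈ W₁ := by_contra fun h => hp n le_rfl (H.eq_end_of_mem z hzW h).symm
    rw [arrowCost_of_mem hzW, arrowCost_of_mem hz₁]
  · have hz₁ : z ∉ W₁ := fun h => hp 0 n.zero_le (H.eq_start_of_mem_new z h hzW).symm
    rw [arrowCost_of_notMem hzW, arrowCost_of_notMem hz₁]
    rw [show H.redirect.next z = g.next z from H.redirectNext_of_notMem_orbit hzW hp]

theorem arrowCost_redirect_start (H : RedirectHyp g x n y W₁) (hx : x ∉ W₁) :
    H.redirect.arrowCost Ve Vp x = Ve s(x, y) - Vp x := by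
  rw [arrowCost_of_notMem hx]
  rw [show H.redirect.next x = y from H.redirectNext_start hx]

variable (Ve Vp) in
/-- Along the reversed path the arrow costs `V_{ij} - V_i` become `V_{ij} - V_j`, so the
difference telescopes to `V_x - V_{g.next^[n] x}`. -/
theorem wcost_redirect [Fintype V] (H : RedirectHyp g x n y W₁) :
    wcost Ve Vp H.redirect + g.arrowCost Ve Vp (g.next^[n] x) + Vp (g.next^[n] x)
      = wcost Ve Vp g + H.redirect.arrowCost Ve Vp x + Vp x := by
  have hdiff : wcost Ve Vp H.redirect - wcost Ve Vp g
      = ∑ j ∈ range (n + 1), (H.redirect.arrowCost Ve Vp (g.next^[j] x)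
          - g.arrowCost Ve Vp (g.next^[j] x)) := by
    rw [wcost_eq_sum_arrowCost, wcost_eq_sum_arrowCost, ← sum_sub_distrib,
      ← sum_subset (subset_univ ((range (n + 1)).image fun j => g.next^[j] x)), sum_image]
    · exact fun i hi j hj h => g.eq_of_iterate_next_eq H.path_notMem
        (Nat.le_of_lt_succ (mem_range.mp hi)) (Nat.le_of_lt_succ (mem_range.mp hj)) h
    · refine fun z _ hz => sub_eq_zero.mpr (H.arrowCost_redirect_of_notMem_orbit ?_)
      exact fun j hj h => hz (mem_image.mpr ⟨j, mem_range.mpr (Nat.lt_succ_of_le hj), h⟩)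
  rw [sum_sub_distrib, H.sum_arrowCost_orbit, g.sum_arrowCost_orbit H.path_notMem]
    at hdiff
  have htel := sum_range_sub (fun j => Vp (g.next^[j] x)) n
  simp only [sum_sub_distrib] at hdiff htel
  rw [Function.iterate_zero_apply] at htel
  linarith

end RedirectHyp

end Cost

section Walk

variable {g : WGraph G W} {T : SimpleGraph V}

theorem exists_walk_to_sink (hg : ∀ z ∉ W, T.Adj z (g.next z)) (x : V) :
    ∃ q : T.Walk x (g.sink x), ∀ f ∈ q.edges, ∃ z, g.Reaches x z ∧ z ∉ W ∧ f = s(z, g.next z) := by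
  obtain ⟨n, hn⟩ := g.absorbed x
  induction n generalizing x with
  | zero => exact ⟨Walk.nil.copy rfl (g.sink_of_mem (x := x) hn).symm, by simp⟩
  | succ n ih =>
    by_cases hx : x ∈ W
    · exact ⟨Walk.nil.copy rfl (g.sink_of_mem hx).symm, by simp⟩
    obtain ⟨q, hq⟩ := ih (g.next x) (by rwa [← Function.iterate_succ_apply])
    have hsink : g.sink (g.next x) = g.sink x := g.sink_iterate x 1
    refine ⟨Walk.cons (hg x hx) (q.copy rfl hsink), ?_⟩
    simp only [Walk.edges_cons, List.mem_cons]
    rintro f (rfl | hf)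
    · exact ⟨x, reaches_refl x, hx, rfl⟩
    · rw [Walk.edges_copy] at hf
      obtain ⟨z, hz, hzW, rfl⟩ := hq f hf
      exact ⟨z, (reaches_iterate x 1).trans hz, hzW, rfl⟩

theorem sink_ne_of_notMem_wEdges [Fintype V] [DecidableEq V] (hT : T.IsAcyclic)
    (hg : ∀ z ∉ W, T.Adj z (g.next z)) {u v : V} (huv : T.Adj u v) (he : s(u, v) ∉ wEdges g) :
    g.sink u ≠ g.sink v := by
  intro h
  obtain ⟨qu, hqu⟩ := exists_walk_to_sink hg u
  obtain ⟨qv, hqv⟩ := exists_walk_to_sink hg v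
  have hmem := hT.mem_edges_of_adj huv (qu.append (qv.copy rfl h.symm).reverse)
  rw [Walk.edges_append, Walk.edges_reverse, Walk.edges_copy, List.mem_append,
    List.mem_reverse] at hmem
  obtain ⟨z, hz, hze⟩ : ∃ z ∉ W, s(u, v) = s(z, g.next z) := by
    rcases hmem with hmem | hmem
    · obtain ⟨z, -, hz⟩ := hqu _ hmem; exact ⟨z, hz⟩
    · obtain ⟨z, -, hz⟩ := hqv _ hmem; exact ⟨z, hz⟩
  exact he (mem_image.mpr ⟨z, mem_compl.mpr hz, hze.symm⟩)

end Walk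

end WGraph

section FreidlinSet

variable {V : Type*} {T : SimpleGraph V} {Ve : Sym2 V → ℝ} {s : V}

def freidlinSet (T : SimpleGraph V) (Ve : Sym2 V → ℝ) (s : V) (a : ℝ) : Set V :=
  {x | ∀ p : T.Walk s x, p.IsPath → (p.edges.map Ve).maximum < (a : WithBot ℝ)}

theorem mem_freidlinSet_iff (hT : T.IsTree) {a : ℝ} {x : V} :
    x ∈ freidlinSet T Ve s a ↔ ∃ q : T.Walk s x, ∀ f ∈ q.edges, Ve f < a := by
  simp only [freidlinSet, Set.mem_ofPred_eq, List.maximum_lt_coe_iff, List.forall_mem_map]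
  constructor
  · intro h
    obtain ⟨p, hp⟩ := (hT.connected.preconnected s x).exists_isPath
    exact ⟨p, h p hp⟩
  · rintro ⟨q, hq⟩ p hp f hf
    exact hq f (hT.isAcyclic.mem_edges_of_isPath hp q hf)

theorem freidlinSet_mono {a b : ℝ} (hab : a ≤ b) : freidlinSet T Ve s a ⊆ freidlinSet T Ve s b :=
  fun _ hx p hp => (hx p hp).trans_le (WithBot.coe_le_coe.mpr hab)

theorem eq_freidlinSet_of_largest (hT : T.IsTree) {Vp : V → ℝ} {C : Set V}
    (hC : IsFreidlinCycle T Ve s C) (hCmin : ∀ x ∈ C, Vp s ≤ Vp x)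
    (hClargest : ∀ C' : Set V, IsFreidlinCycle T Ve s C' → s ∈ C' →
      (∀ x ∈ C', Vp s ≤ Vp x) → C' ⊆ C)
    {θ : ℝ} (hθ : ∀ x ∈ freidlinSet T Ve s θ, Vp s ≤ Vp x) {w : V} (hw : Vp w < Vp s)
    {q : T.Walk s w} (hq : ∀ f ∈ q.edges, Ve f ≤ θ) :
    C = freidlinSet T Ve s θ := by
  obtain ⟨a, rfl⟩ := hC
  have haθ : a ≤ θ := by
    by_contra! hθa
    have hwC : w ∈ freidlinSet T Ve s a :=
      (mem_freidlinSet_iff hT).mpr ⟨q, fun f hf => (hq f hf).trans_lt hθa⟩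
    exact (hCmin w hwC).not_gt hw
  refine (freidlinSet_mono haθ).antisymm (hClargest _ ⟨θ, rfl⟩ ?_ hθ)
  exact (mem_freidlinSet_iff hT).mpr ⟨Walk.nil, by simp⟩

end FreidlinSet

open WGraph

namespace IsOptimalWGraph

variable {V : Type*} [Fintype V] [DecidableEq V] {G T : SimpleGraph V} {Ve : Sym2 V → ℝ}
  {Vp : V → ℝ} {k : ℕ} {W W' : Finset V} {g : WGraph G W} {g' : WGraph G W'} {s : V}

theorem potential_sink_le (hopt : IsOptimalWGraph G Ve Vp k W g) (x : V) :
    Vp (g.sink x) ≤ Vp x := by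
  by_cases hx : x ∈ W
  · rw [g.sink_of_mem hx]
  have hw := g.sink_mem x
  have hpath : ∀ j < g.sinkTime x, g.next^[j] x ∉ W := fun j hj =>
    g.iterate_notMem_of_lt_sinkTime hj
  -- `x` takes over as sink from `g.sink x`
  have H : RedirectHyp g x (g.sinkTime x) x (insert x (W.erase (g.sink x))) := by
    refine ⟨hpath, fun j hj0 hjn hmem => ?_, fun z hz hz₁ => ?_,
      fun z hz₁ hz => (mem_insert.mp hz₁).resolve_right fun h => hz (mem_of_mem_erase h),
      fun h => absurd (mem_insert_self x _) h⟩
    · rcases mem_insert.mp hmem with h | h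
      · exact hj0.ne' (g.eq_of_iterate_next_eq hpath hjn (Nat.zero_le _) h)
      · rcases hjn.lt_or_eq with hlt | rfl
        · exact hpath j hlt (mem_of_mem_erase h)
        · exact notMem_erase _ W h
    · by_contra hne
      exact hz₁ (mem_insert_of_mem (mem_erase.mpr ⟨hne, hz⟩))
  have hcost := H.wcost_redirect Ve Vp
  rw [iterate_sinkTime, arrowCost_of_mem hw, arrowCost_of_mem (mem_insert_self x _)] at hcost
  have hle := hopt.2 _ H.redirect <| by
    rw [card_insert_of_notMem (fun h => hx (mem_of_mem_erase h)), card_erase_add_one hw, hopt.1]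
  linarith

theorem wcost_le_of_split (hopt' : IsOptimalWGraph G Ve Vp (k + 1) W' g') (g : WGraph G W)
    (hW : W.card = k) {v m : V} (hv : v ∉ W) (hm : g.Reaches m v) :
    wcost Ve Vp g' ≤ wcost Ve Vp g - Ve s(v, g.next v) + Vp m := by
  obtain ⟨n, hn⟩ := hm
  have hpath : ∀ j ≤ n, g.next^[j] m ∉ W := fun j hj =>
    (reaches_of_reaches_iterate hn hj).notMem hv
  -- cut the arrow at `v` and make `m` a sink
  have H : RedirectHyp g m n m (insert m W) := by
    refine ⟨fun j hj => hpath j hj.le, fun j hj0 hjn hmem => ?_,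
      fun z hz hz₁ => absurd (mem_insert_of_mem hz) hz₁,
      fun z hz₁ hz => (mem_insert.mp hz₁).resolve_right hz,
      fun h => absurd (mem_insert_self m W) h⟩
    rcases mem_insert.mp hmem with h | h
    · exact hj0.ne' (g.eq_of_iterate_next_eq (fun i hi => hpath i hi.le) hjn n.zero_le h)
    · exact hpath j hjn h
  have hcost := H.wcost_redirect Ve Vp
  rw [arrowCost_of_mem (mem_insert_self m W), hn, arrowCost_of_notMem hv] at hcost
  have hmW : m ∉ W := hpath 0 n.zero_le
  have hle := hopt'.2 _ H.redirect (by rw [card_insert_of_notMem hmW, hW])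
  linarith

theorem wcost_le_of_merge (hopt : IsOptimalWGraph G Ve Vp k W g) (g' : WGraph G W')
    (hW' : W'.card = k + 1) {a b : V} (hab : G.Adj a b) (hsink : g'.sink b ≠ g'.sink a) :
    wcost Ve Vp g ≤ wcost Ve Vp g' + Ve s(a, b) - Vp (g'.sink a) := by
  have hσ := g'.sink_mem a
  have ha : a ∉ W'.erase (g'.sink a) := fun h =>
    ne_of_mem_erase h (g'.sink_of_mem (mem_of_mem_erase h)).symm
  -- drop the sink of `a` and hang its basin on `b` through the edge `ab`
  have H : RedirectHyp g' a (g'.sinkTime a) b (W'.erase (g'.sink a)) := by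
    refine ⟨fun j hj => g'.iterate_notMem_of_lt_sinkTime hj, fun j _ hjn hmem => ?_,
      fun z hz hz₁ => ?_, fun z hz₁ hz => absurd (mem_of_mem_erase hz₁) hz,
      fun _ => ⟨hab, fun hr => hsink (sink_eq_of_reaches hσ hr)⟩⟩
    · rcases hjn.lt_or_eq with hlt | rfl
      · exact g'.iterate_notMem_of_lt_sinkTime hlt (mem_of_mem_erase hmem)
      · exact notMem_erase _ W' hmem
    · by_contra hne
      exact hz₁ (mem_erase.mpr ⟨hne, hz⟩)
  have hcost := H.wcost_redirect Ve Vp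
  rw [iterate_sinkTime, arrowCost_of_mem hσ, H.arrowCost_redirect_start ha] at hcost
  have hle := hopt.2 _ H.redirect (by rw [card_erase_of_mem hσ, hW', Nat.add_sub_cancel])
  linarith

theorem edge_next_le_of_exit (hopt : IsOptimalWGraph G Ve Vp k W g) {v z y : V}
    (hv : v ∉ W) (hz : g.Reaches z v) (hy : ¬ g.Reaches y v) (hzy : G.Adj z y) :
    Ve s(v, g.next v) ≤ Ve s(z, y) := by
  obtain ⟨n, hn⟩ := hz
  have hpath : ∀ j ≤ n, g.next^[j] z ∉ W := fun j hj =>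
    (reaches_of_reaches_iterate hn hj).notMem hv
  -- cut the arrow at `v` and leave the basin of `v` through the edge `zy`
  have H : RedirectHyp g z n y W := ⟨fun j hj => hpath j hj.le, fun j _ hjn => hpath j hjn,
    fun _ h h' => absurd h h', fun _ h h' => absurd h h', fun _ => ⟨hzy, hn ▸ hy⟩⟩
  have hcost := H.wcost_redirect Ve Vp
  rw [H.arrowCost_redirect_start (hpath 0 n.zero_le), hn, arrowCost_of_notMem hv] at hcost
  have hle := hopt.2 _ H.redirect hopt.1
  linarith

theorem adj_next_of_isMST (hVe : Set.InjOn Ve G.edgeSet) (hT : IsMST G Ve T)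
    (hopt : IsOptimalWGraph G Ve Vp k W g) {z : V} (hz : z ∉ W) : T.Adj z (g.next z) := by
  by_contra hzT
  obtain ⟨p, hp⟩ := (hT.1.connected.preconnected z (g.next z)).exists_isPath
  obtain ⟨d, hd, hdz, hdn⟩ := p.exists_boundary_dart {v | g.Reaches v z} (reaches_refl z)
    (not_reaches_next_self hz)
  have hlt := hT.lt_of_mem_edges hVe (g.adj_of_not_sink z hz) hzT hp (List.mem_map_of_mem hd)
  exact (hopt.edge_next_le_of_exit hz hdz hdn (hT.2.1 d.adj)).not_gt hlt

theorem edge_sub_potential_eq (hopt : IsOptimalWGraph G Ve Vp k W g)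
    (hopt' : IsOptimalWGraph G Ve Vp (k + 1) W' g') {v : V} (hv : v ∉ W)
    (hreach : g.Reaches (g'.sink v) v) (hsink : g'.sink (g.next v) ≠ g'.sink v) :
    Ve s(v, g.next v) - Vp (g'.sink v) = wcost Ve Vp g - wcost Ve Vp g' := by
  have h₁ := hopt'.wcost_le_of_split g hopt.1 hv hreach
  have h₂ := hopt.wcost_le_of_merge g' hopt'.1 (g.adj_of_not_sink v hv) hsink
  linarith

/-- If the new sink of `v` did not flow into `v` under `g`, the `g'`-orbit of `v` would leave
the basin of `v`; exchanging arrows across that exit in either graph shows the two edges have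
equal weight, so they coincide by genericness. -/
theorem reaches_sink_of_notMem_wEdges (hVe : Set.InjOn Ve G.edgeSet)
    (hopt : IsOptimalWGraph G Ve Vp k W g) (hopt' : IsOptimalWGraph G Ve Vp (k + 1) W' g')
    {v : V} (hv : v ∉ W) (he' : s(v, g.next v) ∉ wEdges g')
    (hsink : g'.sink (g.next v) ≠ g'.sink v) : g.Reaches (g'.sink v) v := by
  by_contra hnr
  obtain ⟨i, hi, hin, hout⟩ :=
    Nat.exists_lt_and_not_succ (fun j => g.Reaches (g'.next^[j] v) v) (reaches_refl v) hnr
  have hz : g'.next^[i] v ∉ W' := g'.iterate_notMem_of_lt_sinkTime hi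
  have hadj := g'.adj_of_not_sink _ hz
  have hle₁ := hopt'.edge_next_le_of_exit hz (reaches_iterate v i)
    (fun hr => hsink (hr.sink_eq.symm.trans (reaches_iterate v i).sink_eq))
    (g.adj_of_not_sink v hv)
  have hle₂ := hopt.edge_next_le_of_exit hv hin hout
    (by rw [Function.iterate_succ_apply']; exact hadj)
  rw [Function.iterate_succ_apply'] at hle₂
  have heq := hVe (g.adj_of_not_sink v hv) hadj (hle₂.antisymm hle₁)
  exact he' (heq ▸ mem_image.mpr ⟨_, mem_compl.mpr hz, rfl⟩)

theorem potential_sink_lt (hVp : Function.Injective Vp) (hopt : IsOptimalWGraph G Ve Vp k W g)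
    (hsW : s ∉ W) : Vp (g.sink s) < Vp s :=
  (hopt.potential_sink_le s).lt_of_ne fun h => hsW (hVp h ▸ g.sink_mem s)

theorem exists_cut_on_orbit (hVp : Function.Injective Vp) (hopt : IsOptimalWGraph G Ve Vp k W g)
    (hopt' : IsOptimalWGraph G Ve Vp (k + 1) W' g') (hs : s ∈ W') (hsW : s ∉ W) :
    ∃ v ∉ W, g.Reaches s v ∧ g'.sink v = s ∧ g'.sink (g.next v) ≠ s := by
  have hnr : ¬ g'.Reaches (g.sink s) s := fun hr => by
    have hle := hopt'.potential_sink_le (g.sink s)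
    rw [sink_eq_of_reaches hs hr] at hle
    exact (hopt.potential_sink_lt hVp hsW).not_ge hle
  obtain ⟨i, hi, hin, hout⟩ :=
    Nat.exists_lt_and_not_succ (fun j => g'.Reaches (g.next^[j] s) s) (reaches_refl s) hnr
  refine ⟨g.next^[i] s, g.iterate_notMem_of_lt_sinkTime hi, reaches_iterate s i,
    sink_eq_of_reaches hs hin, fun h => hout ?_⟩
  have hr := reaches_sink (g := g') (g.next (g.next^[i] s))
  rwa [h, ← Function.iterate_succ_apply' g.next] at hr

theorem edge_eq_of_mem_wEdges_of_notMem (hgen : Generic G Ve Vp) (hT : IsMST G Ve T)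
    (hopt : IsOptimalWGraph G Ve Vp k W g) (hopt' : IsOptimalWGraph G Ve Vp (k + 1) W' g')
    (hs : s ∈ W') (hsW : s ∉ W) {e : Sym2 V} (he : e ∈ wEdges g) (he' : e ∉ wEdges g') :
    Ve e = wcost Ve Vp g - wcost Ve Vp g' + Vp s := by
  obtain ⟨hVp, hVe, hdiff⟩ := hgen
  obtain ⟨v, hv, hsv, hvs, hnext⟩ := hopt.exists_cut_on_orbit hVp hopt' hs hsW
  have hcut := hopt.edge_sub_potential_eq hopt' hv (by rwa [hvs]) (by rwa [hvs])
  obtain ⟨p, hp, rfl⟩ := mem_image.mp he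
  have hp : p ∉ W := mem_compl.mp hp
  have hsink := sink_ne_of_notMem_wEdges hT.1.isAcyclic
    (fun z hz => hopt'.adj_next_of_isMST hVe hT hz) (hopt.adj_next_of_isMST hVe hT hp) he'
  have hcut' := hopt.edge_sub_potential_eq hopt' hp
    (hopt.reaches_sink_of_notMem_wEdges hVe hopt' hp he' hsink.symm) hsink.symm
  have hps := (hdiff _ (g.adj_of_not_sink p hp) _ (g.adj_of_not_sink v hv) _ _
    (hcut'.trans hcut.symm)).2
  rw [hvs] at hps hcut
  rw [hps] at hcut'
  linarith

theorem threshold_le_edge_of_exit (hopt : IsOptimalWGraph G Ve Vp k W g)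
    (hW' : W'.card = k + 1) (hs : s ∈ W') {z y : V} (hzy : G.Adj z y) (hz : g'.Reaches z s)
    (hy : ¬ g'.Reaches y s) : wcost Ve Vp g - wcost Ve Vp g' + Vp s ≤ Ve s(z, y) := by
  have hmerge := hopt.wcost_le_of_merge g' hW' hzy
    (fun h => hy (h.trans (sink_eq_of_reaches hs hz) ▸ reaches_sink y))
  rw [sink_eq_of_reaches hs hz] at hmerge
  linarith

theorem freidlinSet_subset_reaches (hT : IsMST G Ve T) (hopt : IsOptimalWGraph G Ve Vp k W g)
    (hW' : W'.card = k + 1) (hs : s ∈ W') :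
    freidlinSet T Ve s (wcost Ve Vp g - wcost Ve Vp g' + Vp s) ⊆ {x | g'.Reaches x s} := by
  intro x hx
  obtain ⟨q, hq⟩ := (mem_freidlinSet_iff hT.1).mp hx
  by_contra hxs
  obtain ⟨d, hd, hdz, hdy⟩ := q.exists_boundary_dart {v | g'.Reaches v s} (reaches_refl s) hxs
  exact (hq _ (List.mem_map_of_mem hd)).not_ge
    (hopt.threshold_le_edge_of_exit hW' hs (hT.2.1 d.adj) hdz hdy)

theorem exists_walk_to_sink_edge_le (hVe : Set.InjOn Ve G.edgeSet)
    (hT : IsMST G Ve T) (hopt : IsOptimalWGraph G Ve Vp k W g)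
    (hopt' : IsOptimalWGraph G Ve Vp (k + 1) W' g') :
    ∃ q : T.Walk s (g.sink s), ∀ f ∈ q.edges, Ve f ≤ wcost Ve Vp g - wcost Ve Vp g' + Vp s := by
  obtain ⟨q, hq⟩ := exists_walk_to_sink (fun z hz => hopt.adj_next_of_isMST hVe hT hz) s
  refine ⟨q, fun f hf => ?_⟩
  obtain ⟨z, hsz, hz, rfl⟩ := hq f hf
  have := hopt'.wcost_le_of_split g hopt.1 hz hsz
  linarith

end IsOptimalWGraph

open IsOptimalWGraph

theorem freidlin_cycle_of_new_sink_general {V : Type*} [Fintype V] [DecidableEq V]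
    (G : SimpleGraph V) (Ve : Sym2 V → ℝ) (Vp : V → ℝ)
    (hgen : Generic G Ve Vp)
    (T : SimpleGraph V) (hT : IsMST G Ve T) (k : ℕ)
    (W : Finset V) (g : WGraph G W) (hopt : IsOptimalWGraph G Ve Vp k W g)
    (W' : Finset V) (g' : WGraph G W') (hopt' : IsOptimalWGraph G Ve Vp (k + 1) W' g')
    (s : V) (hs : s ∈ W') (hsW : s ∉ W)
    (e : Sym2 V) (he : e ∈ wEdges g) (he' : e ∉ wEdges g')
    (C : Set V)
    (hC : IsFreidlinCycle T Ve s C)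
    (hCmin : ∀ x ∈ C, Vp s ≤ Vp x)
    (hClargest : ∀ C' : Set V, IsFreidlinCycle T Ve s C' → s ∈ C' →
      (∀ x ∈ C', Vp s ≤ Vp x) → C' ⊆ C) :
    C = {x : V | (∃ n : ℕ, g'.next^[n] x = s) ∧ ∀ p : T.Walk s x, p.IsPath →
        (p.edges.map Ve).maximum < (Ve e : WithBot ℝ)} ∧
      C ⊆ {x : V | ∃ n : ℕ, g'.next^[n] x = s} := by
  have hθ := hopt.edge_eq_of_mem_wEdges_of_notMem hgen hT hopt' hs hsW he he'
  have hsub : freidlinSet T Ve s (Ve e) ⊆ {x | g'.Reaches x s} :=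
    hθ ▸ hopt.freidlinSet_subset_reaches hT hopt'.1 hs
  obtain ⟨q, hq⟩ := hopt.exists_walk_to_sink_edge_le hgen.2.1 hT hopt'
  have hCeq : C = freidlinSet T Ve s (Ve e) :=
    eq_freidlinSet_of_largest hT.1 hC hCmin hClargest
      (fun x hx => sink_eq_of_reaches hs (hsub hx) ▸ hopt'.potential_sink_le x)
      (hopt.potential_sink_lt hgen.1 hsW) (q := q) (fun f hf => hθ ▸ hq f hf)
  exact ⟨hCeq.trans (Set.ext fun x => ⟨fun hx => ⟨hsub hx, hx⟩, And.right⟩), hCeq ▸ hsub⟩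

/-- under the genericness assumption, the largest Freidlin's cycle `C`
containing the new sink `s` of the optimal `(k+1)`-sink `W`-graph and not containing any
state of smaller potential equals
`{x ∈ t | max of V_{ij} over the tree path from s to x < V_{p* q*}}`, where `t` is the
component of the optimal forest containing `s` (the states whose arrows lead to `s`) and
`e = (p*, q*)` is the edge removed when passing from the optimal `k`-sink forest; in
particular `C ⊆ t`. -/
theorem freidlin_cycle_of_new_sink {V : Type*} [Fintype V] [DecidableEq V]
    (G : SimpleGraph V) (hG : G.Connected) (Ve : Sym2 V → ℝ) (Vp : V → ℝ)
    (hgen : Generic G Ve Vp)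
    (T : SimpleGraph V) (hT : IsMST G Ve T) (k : ℕ) (hk : 1 ≤ k)
    (W : Finset V) (g : WGraph G W) (hopt : IsOptimalWGraph G Ve Vp k W g)
    (W' : Finset V) (g' : WGraph G W') (hopt' : IsOptimalWGraph G Ve Vp (k + 1) W' g')
    (s : V) (hs : s ∈ W') (hsW : s ∉ W)
    (e : Sym2 V) (he : e ∈ wEdges g) (he' : e ∉ wEdges g')
    (C : Set V)
    (hC : IsFreidlinCycle T Ve s C) (hsC : s ∈ C)
    (hCmin : ∀ x ∈ C, Vp s ≤ Vp x)
    (hClargest : ∀ C' : Set V, IsFreidlinCycle T Ve s C' → s ∈ C' →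
      (∀ x ∈ C', Vp s ≤ Vp x) → C' ⊆ C) :
    C = {x : V | (∃ n : ℕ, g'.next^[n] x = s) ∧ ∀ p : T.Walk s x, p.IsPath →
        (p.edges.map Ve).maximum < (Ve e : WithBot ℝ)} ∧
      C ⊆ {x : V | ∃ n : ℕ, g'.next^[n] x = s} :=
  freidlin_cycle_of_new_sink_general G Ve Vp hgen T hT k W g hopt W' g' hopt' s hs hsW e he he' C hC
    hCmin hClargest
end

section
/- A path w*(k,l) in a minimum spanning tree between any two vertices k and l, restricted to any subpath between vertices a, b on it, is itself a minimax path: the maximum edge cost along the tree path from a to b equals the minimum over all paths from a to b in the graph of the maximum edge cost. -/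
namespace SimpleGraph

variable {V : Type*} {G H T : SimpleGraph V}

lemma Preconnected.reachable_deleteEdges_or (hT : T.Preconnected) (u v w : V) :
    (T.deleteEdges {s(u, v)}).Reachable w u ∨ (T.deleteEdges {s(u, v)}).Reachable w v := by
  by_contra! h
  obtain ⟨p⟩ := hT w u
  obtain ⟨d, -, hfst, hsnd⟩ :=
    p.exists_boundary_dart {z | (T.deleteEdges {s(u, v)}).Reachable w z} .rfl h.1
  by_cases hd : d.edge = s(u, v)
  · rcases Sym2.eq_iff.1 hd with ⟨hu, -⟩ | ⟨hv, -⟩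
    · exact h.1 (hu ▸ hfst)
    · exact h.2 (hv ▸ hfst)
  · have hadj : (T.deleteEdges {s(u, v)}).Adj d.fst d.snd := (deleteEdges_adj ..).2 ⟨d.adj, hd⟩
    exact hsnd (Reachable.trans hfst hadj.reachable)

lemma Preconnected.reachable_deleteEdges_or_of_not_reachable (hT : T.Preconnected) {u v x y : V}
    (hxy : ¬ (T.deleteEdges {s(u, v)}).Reachable x y) (w : V) :
    (T.deleteEdges {s(u, v)}).Reachable w x ∨ (T.deleteEdges {s(u, v)}).Reachable w y := by
  have hw := hT.reachable_deleteEdges_or u v w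
  have hx := hT.reachable_deleteEdges_or u v x
  have hy := hT.reachable_deleteEdges_or u v y
  -- at most two components, the one of `u` and the one of `v`, so `x` and `y` sit in different ones
  simp only [← ConnectedComponent.eq] at *
  grind

lemma IsTree.sup_edge_deleteEdges (hT : T.IsTree) {u v x y : V}
    (hxy : ¬ (T.deleteEdges {s(u, v)}).Reachable x y) :
    (T.deleteEdges {s(u, v)} ⊔ edge x y).IsTree := by
  have hne : x ≠ y := by rintro rfl; exact hxy .rfl
  have hadj : (T.deleteEdges {s(u, v)} ⊔ edge x y).Adj y x := Or.inr (by simp [edge_adj, hne.symm])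
  have hreach (w : V) : (T.deleteEdges {s(u, v)} ⊔ edge x y).Reachable w x := by
    rcases hT.connected.preconnected.reachable_deleteEdges_or_of_not_reachable hxy w with h | h
    · exact h.mono le_sup_left
    · exact (h.mono le_sup_left).trans hadj.reachable
  refine ⟨(connected_iff _).2 ⟨fun w z ↦ (hreach w).trans (hreach z).symm, ⟨x⟩⟩, ?_⟩
  exact (hT.isAcyclic.anti (deleteEdges_le _)).sup_edge_of_not_reachable hxy

lemma IsAcyclic.not_reachable_deleteEdges_of_mem_edges (hT : T.IsAcyclic) {a b : V}
    {q : T.Walk a b} (hq : q.IsPath) {e : Sym2 V} (he : e ∈ q.edges) :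
    ¬ (T.deleteEdges {e}).Reachable a b := by
  rintro hr
  obtain ⟨r, hr⟩ := hr.exists_isPath
  have hqr : q = r.mapLe (deleteEdges_le _) :=
    congrArg Subtype.val <| (hT.subsingleton_path a b).elim ⟨q, hq⟩ ⟨_, hr.mapLe _⟩
  rw [hqr, Walk.edges_mapLe_eq_edges] at he
  simpa using r.edges_subset_edgeSet he

lemma Walk.exists_mem_edges_not_reachable {a b : V} (r : G.Walk a b) (h : ¬ H.Reachable a b) :
    ∃ x y, s(x, y) ∈ r.edges ∧ ¬ H.Reachable x y := by
  obtain ⟨d, hd, hfst, hsnd⟩ := r.exists_boundary_dart {z | H.Reachable a z} .rfl h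
  exact ⟨d.fst, d.snd, List.mem_map_of_mem hd, fun h' ↦ hsnd (Reachable.trans hfst h')⟩

end SimpleGraph

open SimpleGraph

theorem IsMST.cost_le_of_not_reachable_deleteEdges {V : Type*} [Finite V]
    {G T : SimpleGraph V} {c : Sym2 V → ℝ} (hT : IsMST G c T) {e : Sym2 V} (he : e ∈ T.edgeSet)
    {x y : V} (hxy : G.Adj x y) (hsep : ¬ (T.deleteEdges {e}).Reachable x y) :
    c e ≤ c s(x, y) := by
  induction e using Sym2.ind with | _ u v => ?_
  have hxy_notMem : s(x, y) ∉ T.edgeSet \ {s(u, v)} := fun h ↦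
    hsep (Adj.reachable (by rwa [← mem_edgeSet, edgeSet_deleteEdges]))
  have hle : T.deleteEdges {s(u, v)} ⊔ edge x y ≤ G :=
    sup_le ((deleteEdges_le _).trans hT.2.1) ((edge_le_iff G).2 (Or.inr hxy))
  have hmin := hT.2.2 _ (hT.1.sup_edge_deleteEdges hsep) hle
  rw [edgeSet_sup, edgeSet_edge_of_ne hxy.ne, edgeSet_deleteEdges, Set.union_singleton,
    finsum_mem_insert _ hxy_notMem (Set.toFinite _),
    ← finsum_mem_add_sdiff (Set.singleton_subset_iff.2 he) (Set.toFinite _),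
    finsum_mem_singleton] at hmin
  linarith

theorem mst_subpath_minimax_general {V : Type*} [Fintype V]
    (G T : SimpleGraph V) (c : Sym2 V → ℝ)
    (hT : IsMST G c T) (a b : V)
    (q : T.Walk a b) (hq : q.IsPath) :
    IsLeast {m : WithBot ℝ | ∃ r : G.Walk a b, r.IsPath ∧ (r.edges.map c).maximum = m}
      ((q.edges.map c).maximum) := by
  refine ⟨⟨q.mapLe hT.2.1, hq.mapLe _, by rw [Walk.edges_mapLe_eq_edges]⟩, ?_⟩
  rintro m ⟨r, -, rfl⟩
  refine List.maximum_le_of_forall_le fun _ hce ↦ ?_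
  obtain ⟨e, he, rfl⟩ := List.mem_map.1 hce
  obtain ⟨x, y, hxy, hsep⟩ := r.exists_mem_edges_not_reachable
    (hT.1.isAcyclic.not_reachable_deleteEdges_of_mem_edges hq he)
  calc (c e : WithBot ℝ)
      ≤ c s(x, y) := WithBot.coe_le_coe.2 <|
        hT.cost_le_of_not_reachable_deleteEdges (q.edges_subset_edgeSet he)
          (r.adj_of_mem_edges hxy) hsep
    _ ≤ (r.edges.map c).maximum := List.le_maximum_of_mem' (List.mem_map_of_mem hxy)

/-- any subpath of a minimum-spanning-tree path is itself minimax: if `p` is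
the tree path between `k` and `l` and `a`, `b` lie on `p`, then the maximum edge cost along
the tree path `q` from `a` to `b` equals the minimum over all `G`-paths from `a` to `b` of
the maximum edge cost along the path. -/
theorem mst_subpath_minimax {V : Type*} [Fintype V]
    (G T : SimpleGraph V) (c : Sym2 V → ℝ)
    (hG : G.Connected) (hT : IsMST G c T) (k l : V)
    (p : T.Walk k l) (hp : p.IsPath) (a b : V)
    (ha : a ∈ p.support) (hb : b ∈ p.support)
    (q : T.Walk a b) (hq : q.IsPath) :
    IsLeast {m : WithBot ℝ | ∃ r : G.Walk a b, r.IsPath ∧ (r.edges.map c).maximum = m}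
      ((q.edges.map c).maximum) :=
  mst_subpath_minimax_general G T c hT a b q hq
end
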